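/- arXiv:2306.16394 — 10 statements merged into one kernel-verified Lean document; each statement's English description precedes it below -/
import Mathlib

section
/- Let X_1, X_2, ... be a sequence of random variables taking values in [0, l], adapted so that Y_k = E[X_k | F_k] where F_k = σ(X_1,...,X_{k-1}). Then for any δ > 0, the probability that there exists n with Σ_{k=1}^n X_k ≥ 3 Σ_{k=1}^n Y_k + l·ln(1/δ) is at most δ. -/
open MeasureTheory Finset

/-!
With `t = 1 / l`, the bound `exp x ≤ 1 + 3x` on `[0, 1]` gives
`E[exp (t X_k) | F_k] ≤ 1 + 3 t Y_k ≤ exp (3 t Y_k)`, so `Z_n = exp (t ∑_{k<n} (X_k - 3 Y_k))` is a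
nonnegative supermartingale with `Z_0 = 1`. The event of the theorem is `{∃ n, 1 / δ ≤ Z_n}`, and
Ville's inequality (optional stopping at the first time `Z` reaches `1 / δ`) bounds its probability
by `δ`.
-/

namespace MeasureTheory

variable {Ω : Type*} {m0 : MeasurableSpace Ω} {μ : Measure Ω}

theorem integrable_exp_of_ae_le [IsFiniteMeasure μ] {f : Ω → ℝ} (hf : AEStronglyMeasurable f μ)
    {C : ℝ} (hfC : ∀ᵐ ω ∂μ, f ω ≤ C) : Integrable (fun ω => Real.exp (f ω)) μ :=
  .of_bound (Real.continuous_exp.comp_aestronglyMeasurable hf) (Real.exp C) <| by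
    filter_upwards [hfC] with ω hω
    rw [Real.norm_of_nonneg (Real.exp_pos _).le]
    exact Real.exp_le_exp.2 hω

theorem condExp_exp_div_le [IsFiniteMeasure μ] {m : MeasurableSpace Ω} (hm : m ≤ m0)
    {W : Ω → ℝ} {l : ℝ} (hl : 0 < l) (hW : AEStronglyMeasurable[m0] W μ) (hW0 : ∀ᵐ ω ∂μ, 0 ≤ W ω)
    (hWl : ∀ᵐ ω ∂μ, W ω ≤ l) :
    μ[fun ω => Real.exp (W ω / l) | m] ≤ᵐ[μ] fun ω => Real.exp (3 * μ[W | m] ω / l) := by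
  have hWint : Integrable W μ := .of_bound hW l <| by
    filter_upwards [hW0, hWl] with ω h0 h1
    rwa [Real.norm_of_nonneg h0]
  have hlin : (fun ω => 1 + 3 * W ω / l) = (fun _ => 1) + (3 / l) • W := by
    ext ω; simp only [Pi.add_apply, Pi.smul_apply, smul_eq_mul]; ring
  have hlin_int : Integrable (fun ω => 1 + 3 * W ω / l) μ := by
    rw [hlin]; exact (integrable_const 1).add (hWint.smul _)
  have hpt : (fun ω => Real.exp (W ω / l)) ≤ᵐ[μ] fun ω => 1 + 3 * W ω / l := by
    filter_upwards [hW0, hWl] with ω h0 h1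
    have hx0 : 0 ≤ W ω / l := div_nonneg h0 hl.le
    have hx1 : W ω / l ≤ 1 := (div_le_one hl).2 h1
    have := (abs_le.1 (Real.abs_exp_sub_one_le (abs_le.2 ⟨by linarith, hx1⟩))).2
    rw [abs_of_nonneg hx0] at this
    linarith [mul_div_assoc 3 (W ω) l]
  have hcond : μ[fun ω => 1 + 3 * W ω / l | m] =ᵐ[μ] fun ω => 1 + 3 * μ[W | m] ω / l := by
    rw [hlin]
    filter_upwards [condExp_add (integrable_const (1 : ℝ)) (hWint.smul (3 / l)) m,
      condExp_smul (3 / l) W m] with ω h1 h2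
    rw [h1, Pi.add_apply, h2, condExp_const hm]
    simp only [Pi.smul_apply, smul_eq_mul]; ring
  have hexp_int : Integrable (fun ω => Real.exp (W ω / l)) μ :=
    integrable_exp_of_ae_le (by fun_prop) (C := 1) <| by
      filter_upwards [hWl] with ω h using (div_le_one hl).2 h
  filter_upwards [condExp_mono (m := m) hexp_int hlin_int hpt, hcond] with ω h1 h2
  rw [h2] at h1
  linarith [Real.add_one_le_exp (3 * μ[W | m] ω / l)]

section Ville

variable [IsFiniteMeasure μ] {ℱ : Filtration ℕ m0} {Z : ℕ → Ω → ℝ}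

theorem Supermartingale.mul_measureReal_exists_le_le (hZ : Supermartingale Z ℱ μ)
    (hnonneg : ∀ n, 0 ≤ᵐ[μ] Z n) {c : ℝ} (hc : 0 ≤ c) (n : ℕ) :
    c * μ.real {ω | ∃ k ≤ n, c ≤ Z k ω} ≤ ∫ ω, Z 0 ω ∂μ := by
  set τ : Ω → ℕ∞ := fun ω => (hittingBtwn Z (Set.Ici c) 0 n ω : ℕ)
  have hτ : IsStoppingTime ℱ τ :=
    hZ.stronglyAdapted.adapted.isStoppingTime_hittingBtwn measurableSet_Ici
  have hτn : ∀ ω, τ ω ≤ n := fun ω => WithTop.coe_le_coe.2 (hittingBtwn_le ω)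
  have hsub : {ω | ∃ k ≤ n, c ≤ Z k ω} ⊆ {ω | c ≤ stoppedValue Z τ ω} :=
    fun ω ⟨k, hkn, hk⟩ => stoppedValue_hittingBtwn_mem ⟨k, ⟨Nat.zero_le k, hkn⟩, hk⟩
  have hτ_nonneg : 0 ≤ᵐ[μ] stoppedValue Z τ := by
    filter_upwards [ae_all_iff.2 hnonneg] with ω h using h _
  have optional_stopping : ∫ ω, stoppedValue Z τ ω ∂μ ≤ ∫ ω, Z 0 ω ∂μ := by
    have := hZ.neg.expected_stoppedValue_mono (isStoppingTime_const ℱ 0) hτ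
      (fun _ => zero_le) hτn
    rw [stoppedValue_const] at this
    simpa [stoppedValue, integral_neg] using this
  calc c * μ.real {ω | ∃ k ≤ n, c ≤ Z k ω}
      ≤ c * μ.real {ω | c ≤ stoppedValue Z τ ω} :=
        mul_le_mul_of_nonneg_left (measureReal_mono hsub) hc
    _ ≤ ∫ ω, stoppedValue Z τ ω ∂μ :=
        mul_meas_ge_le_integral_of_nonneg hτ_nonneg
          (integrable_stoppedValue ℕ hτ hZ.integrable hτn) c
    _ ≤ ∫ ω, Z 0 ω ∂μ := optional_stopping

theorem Supermartingale.ville_ineq (hZ : Supermartingale Z ℱ μ) (hnonneg : ∀ n, 0 ≤ᵐ[μ] Z n)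
    {c : ℝ} (hc : 0 < c) :
    μ {ω | ∃ n, c ≤ Z n ω} ≤ ENNReal.ofReal ((∫ ω, Z 0 ω ∂μ) / c) := by
  have hunion : {ω | ∃ n, c ≤ Z n ω} = ⋃ n, {ω | ∃ k ≤ n, c ≤ Z k ω} := by
    ext ω; simp only [Set.mem_ofPred_eq, Set.mem_iUnion]
    exact ⟨fun ⟨n, h⟩ => ⟨n, n, le_rfl, h⟩, fun ⟨_, k, _, h⟩ => ⟨k, h⟩⟩
  have hmono : Monotone fun n => {ω | ∃ k ≤ n, c ≤ Z k ω} :=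
    fun m n hmn ω ⟨k, hkm, hk⟩ => ⟨k, hkm.trans hmn, hk⟩
  rw [hunion, hmono.measure_iUnion]
  refine iSup_le fun n => ?_
  rw [← ofReal_measureReal]
  exact ENNReal.ofReal_le_ofReal <|
    (le_div_iff₀' hc).2 (hZ.mul_measureReal_exists_le_le hnonneg hc.le n)

end Ville

section CompensatedExp

variable {X Y : ℕ → Ω → ℝ} {l : ℝ}

noncomputable def compensatedExp (l : ℝ) (X Y : ℕ → Ω → ℝ) (n : ℕ) (ω : Ω) : ℝ :=
  Real.exp ((∑ k ∈ range n, (X k ω - 3 * Y k ω)) / l)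

theorem compensatedExp_zero : compensatedExp l X Y 0 = 1 := by
  ext; simp [compensatedExp]

theorem compensatedExp_succ (n : ℕ) (ω : Ω) :
    compensatedExp l X Y (n + 1) ω =
      compensatedExp l X Y n ω * Real.exp (-(3 * Y n ω / l)) * Real.exp (X n ω / l) := by
  simp only [compensatedExp, sum_range_succ, ← Real.exp_add]
  congr 1
  ring

theorem le_compensatedExp_iff (hl : 0 < l) {c : ℝ} (hc : 0 < c) (n : ℕ) (ω : Ω) :
    c ≤ compensatedExp l X Y n ω ↔
      3 * ∑ k ∈ range n, Y k ω + l * Real.log c ≤ ∑ k ∈ range n, X k ω := by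
  rw [compensatedExp, ← Real.log_le_iff_le_exp hc, le_div_iff₀ hl, sum_sub_distrib, ← mul_sum]
  constructor <;> intro h <;> linarith

theorem stronglyAdapted_compensatedExp {ℱ : Filtration ℕ m0}
    (hX : ∀ k, StronglyMeasurable[ℱ (k + 1)] (X k)) (hY : ∀ k, StronglyMeasurable[ℱ k] (Y k)) :
    StronglyAdapted ℱ (compensatedExp l X Y) := fun n =>
  Real.continuous_exp.comp_stronglyMeasurable <|
    (Finset.stronglyMeasurable_fun_sum (range n) fun k hk =>
      ((hX k).mono (ℱ.mono (mem_range.1 hk))).sub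
        (((hY k).mono (ℱ.mono (mem_range.1 hk).le)).const_mul 3)).mul_const l⁻¹

theorem integrable_compensatedExp [IsFiniteMeasure μ] (hl : 0 < l)
    (hX : ∀ k, AEStronglyMeasurable (X k) μ) (hY : ∀ k, AEStronglyMeasurable (Y k) μ)
    (hXl : ∀ k, ∀ᵐ ω ∂μ, X k ω ≤ l) (hY0 : ∀ k, ∀ᵐ ω ∂μ, 0 ≤ Y k ω) (n : ℕ) :
    Integrable (compensatedExp l X Y n) μ :=
  integrable_exp_of_ae_le (by fun_prop) (C := n) <| by
    filter_upwards [ae_all_iff.2 hXl, ae_all_iff.2 hY0] with ω hXω hYω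
    rw [div_le_iff₀ hl]
    calc ∑ k ∈ range n, (X k ω - 3 * Y k ω) ≤ ∑ _k ∈ range n, l :=
          sum_le_sum fun k _ => by linarith [hXω k, hYω k]
      _ = n * l := by simp

theorem supermartingale_compensatedExp [IsFiniteMeasure μ] {ℱ : Filtration ℕ m0} (hl : 0 < l)
    (hX : ∀ k, StronglyMeasurable[ℱ (k + 1)] (X k)) (hX0 : ∀ k, ∀ᵐ ω ∂μ, 0 ≤ X k ω)
    (hXl : ∀ k, ∀ᵐ ω ∂μ, X k ω ≤ l) (hY : ∀ k, Y k = μ[X k | ℱ k]) :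
    Supermartingale (compensatedExp l X Y) ℱ μ := by
  have hXm : ∀ k, AEStronglyMeasurable (X k) μ :=
    fun k => ((hX k).mono (ℱ.le _)).aestronglyMeasurable
  have hYm : ∀ k, StronglyMeasurable[ℱ k] (Y k) := fun k => hY k ▸ stronglyMeasurable_condExp
  have hY0 : ∀ k, ∀ᵐ ω ∂μ, 0 ≤ Y k ω := fun k => hY k ▸ condExp_nonneg (hX0 k)
  have hadapted := stronglyAdapted_compensatedExp (l := l) hX hYm
  have hint := integrable_compensatedExp hl hXm
    (fun k => ((hYm k).mono (ℱ.le k)).aestronglyMeasurable) hXl hY0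
  refine supermartingale_nat hadapted hint fun n => ?_
  set C : Ω → ℝ := fun ω => compensatedExp l X Y n ω * Real.exp (-(3 * Y n ω / l))
  have hC : StronglyMeasurable[ℱ n] C :=
    (hadapted n).mul (Real.continuous_exp.comp_stronglyMeasurable
      (((hYm n).const_mul 3).mul_const l⁻¹).neg)
  have hsplit : compensatedExp l X Y (n + 1) = C * fun ω => Real.exp (X n ω / l) :=
    funext (compensatedExp_succ n)
  have hexp_int : Integrable (fun ω => Real.exp (X n ω / l)) μ :=
    integrable_exp_of_ae_le (by fun_prop) (C := 1) <| by
      filter_upwards [hXl n] with ω h using (div_le_one hl).2 h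
  have hpull : μ[compensatedExp l X Y (n + 1) | ℱ n]
      =ᵐ[μ] C * μ[fun ω => Real.exp (X n ω / l) | ℱ n] :=
    hsplit ▸ condExp_mul_of_stronglyMeasurable_left hC (hsplit ▸ hint (n + 1)) hexp_int
  filter_upwards [hpull, condExp_exp_div_le (ℱ.le n) hl (hXm n) (hX0 n) (hXl n)] with ω h1 h2
  rw [h1, Pi.mul_apply]
  rw [← hY n] at h2
  calc C ω * μ[fun ω => Real.exp (X n ω / l) | ℱ n] ω
      ≤ C ω * Real.exp (3 * Y n ω / l) :=
        mul_le_mul_of_nonneg_left h2 (mul_pos (Real.exp_pos _) (Real.exp_pos _)).le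
    _ = compensatedExp l X Y n ω := by
      simp only [C, mul_assoc, ← Real.exp_add, neg_add_cancel, Real.exp_zero, mul_one]

end CompensatedExp

end MeasureTheory

/-- Multiplicative Bernstein-type bound: for `[0,l]`-valued adapted random variables
`X k` with `Y k = E[X k | ℱ k]`, the probability that at some time `n` the partial sum
of the `X`'s exceeds three times the partial sum of the `Y`'s plus `l · ln(1/δ)`
is at most `δ`. -/
theorem stmt0 {Ω : Type*} {m0 : MeasurableSpace Ω} {μ : Measure Ω}
    [IsProbabilityMeasure μ] (ℱ : Filtration ℕ m0)
    (X Y : ℕ → Ω → ℝ) (l δ : ℝ) (hl : 0 < l) (hδ : 0 < δ)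
    (hmeas : ∀ k, StronglyMeasurable[ℱ (k + 1)] (X k))
    (hX0 : ∀ k, ∀ᵐ ω ∂μ, 0 ≤ X k ω)
    (hXl : ∀ k, ∀ᵐ ω ∂μ, X k ω ≤ l)
    (hY : ∀ k, Y k = μ[X k | ℱ k]) :
    μ {ω | ∃ n, 3 * ∑ k ∈ range n, Y k ω + l * Real.log (1 / δ)
        ≤ ∑ k ∈ range n, X k ω} ≤ ENNReal.ofReal δ := by
  have hZ := supermartingale_compensatedExp hl hmeas hX0 hXl hY
  have hZ_nonneg : ∀ n, 0 ≤ᵐ[μ] compensatedExp l X Y n :=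
    fun n => ae_of_all _ fun ω => (Real.exp_pos _).le
  simp_rw [← le_compensatedExp_iff hl (one_div_pos.2 hδ)]
  calc μ {ω | ∃ n, 1 / δ ≤ compensatedExp l X Y n ω}
      ≤ ENNReal.ofReal ((∫ ω, compensatedExp l X Y 0 ω ∂μ) / (1 / δ)) :=
        hZ.ville_ineq hZ_nonneg (by positivity)
    _ = ENNReal.ofReal δ := by simp [compensatedExp_zero]
end

section
/- Let α_i = (H+1)/(H+i), α_τ^i = α_i Π_{j=i+1}^τ (1-α_j), and for j ≥ i define w_j^i = Σ_{i'=i}^j α_{i'}^i. Then w_j^{i_1} ≤ w_j^{i_2} whenever j ≥ i_1 ≥ i_2 ≥ 1. -/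
open Finset

/-- The Q-learning step size `α_i = (H+1)/(H+i)`. -/
noncomputable def qAlpha (H : ℝ) (i : ℕ) : ℝ := (H + 1) / (H + i)

/-- The cumulative weight `α_τ^i = α_i ∏_{j=i+1}^τ (1 - α_j)`. -/
noncomputable def qW (H : ℝ) (τ i : ℕ) : ℝ :=
  qAlpha H i * ∏ j ∈ Ioc i τ, (1 - qAlpha H j)

/-- `w_j^i = Σ_{i'=i}^j α_{i'}^i`. -/
noncomputable def qWsum (H : ℝ) (j i : ℕ) : ℝ := ∑ i' ∈ Icc i j, qW H i' i

/-!
Splitting off the first term of `w_j^i` gives the recursion `w_j^i = α_i + i/(H+i) · w_j^{i+1}`.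
Downward induction on `i` then yields `H · w_j^i ≤ H + 1`, and substituted back into the
recursion this bound is exactly `w_j^{i+1} ≤ w_j^i`.
-/

lemma one_sub_qAlpha_succ {H : ℝ} {i : ℕ} (h : H + (i + 1 : ℕ) ≠ 0) :
    1 - qAlpha H (i + 1) = i / (H + (i + 1 : ℕ)) := by
  rw [qAlpha, eq_div_iff h, sub_mul, div_mul_cancel₀ _ h]
  push_cast
  ring

@[simp]
lemma qW_self (H : ℝ) (i : ℕ) : qW H i i = qAlpha H i := by
  simp [qW]

lemma qW_eq_mul_qW_succ {H : ℝ} {i τ : ℕ} (h : H + (i + 1 : ℕ) ≠ 0) (hiτ : i < τ) :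
    qW H τ i = i / (H + i) * qW H τ (i + 1) := by
  rw [qW, qW, ← Icc_add_one_left_eq_Ioc, ← Ioc_insert_left hiτ, prod_insert left_notMem_Ioc,
    one_sub_qAlpha_succ h, qAlpha, qAlpha]
  ring

lemma qWsum_of_lt {H : ℝ} {i j : ℕ} (hji : j < i) : qWsum H j i = 0 := by
  simp [qWsum, Icc_eq_empty_of_lt hji]

lemma qWsum_eq_qAlpha_add {H : ℝ} {i j : ℕ} (h : H + (i + 1 : ℕ) ≠ 0) (hij : i ≤ j) :
    qWsum H j i = qAlpha H i + i / (H + i) * qWsum H j (i + 1) := by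
  rw [qWsum, ← Ioc_insert_left hij, sum_insert left_notMem_Ioc, qW_self, qWsum, mul_sum,
    Icc_add_one_left_eq_Ioc]
  congr 1
  refine sum_congr rfl fun τ hτ => qW_eq_mul_qW_succ h ?_
  exact (mem_Ioc.mp hτ).1

section

variable {H : ℝ} (hH : 0 < H)
include hH

lemma mul_qWsum_le (j i : ℕ) : H * qWsum H j i ≤ H + 1 := by
  rcases lt_or_ge (j + 1) i with hji | hij
  · rw [qWsum_of_lt (by omega)]
    linarith
  induction hij using Nat.decreasingInduction with
  | self => rw [qWsum_of_lt (by omega)]; linarith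
  | of_succ i hi ih =>
    have hHi : 0 < H + i := by positivity
    rw [qWsum_eq_qAlpha_add (by positivity) (by omega), qAlpha, ← sub_nonneg]
    have hslack : H + 1 - H * ((H + 1) / (H + i) + i / (H + i) * qWsum H j (i + 1)) =
        i / (H + i) * (H + 1 - H * qWsum H j (i + 1)) := by
      field_simp
      ring
    rw [hslack]
    exact mul_nonneg (by positivity) (sub_nonneg.mpr ih)

lemma qWsum_antitone (j : ℕ) : Antitone (qWsum H j) := by
  refine antitone_nat_of_succ_le fun i => ?_
  rcases lt_or_ge j i with hji | hij
  · rw [qWsum_of_lt hji, qWsum_of_lt (by omega)]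
  have hHi : 0 < H + i := by positivity
  rw [qWsum_eq_qAlpha_add (by positivity) hij, qAlpha, ← sub_nonneg]
  have hgap : (H + 1) / (H + i) + i / (H + i) * qWsum H j (i + 1) - qWsum H j (i + 1) =
      (H + 1 - H * qWsum H j (i + 1)) / (H + i) := by
    field_simp
    ring
  rw [hgap]
  exact div_nonneg (sub_nonneg.mpr (mul_qWsum_le hH j (i + 1))) hHi.le

end

theorem stmt4_general (H : ℝ) (hH : 1 ≤ H) (i₁ i₂ j : ℕ)
    (h21 : i₂ ≤ i₁) :
    qWsum H j i₁ ≤ qWsum H j i₂ :=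
  qWsum_antitone (by linarith) j h21

/-- Monotonicity of the partial weight sums: `w_j^{i₁} ≤ w_j^{i₂}` for `j ≥ i₁ ≥ i₂ ≥ 1`. -/
theorem stmt4 (H : ℝ) (hH : 1 ≤ H) (i₁ i₂ j : ℕ)
    (h2 : 1 ≤ i₂) (h21 : i₂ ≤ i₁) (h1j : i₁ ≤ j) :
    qWsum H j i₁ ≤ qWsum H j i₂ :=
  stmt4_general H hH i₁ i₂ j h21
end

section
/- For i ≥ 1, k ≥ 0, H ≥ 1, with α_i = (H+1)/(H+i), α_τ^i = α_i Π_{j=i+1}^τ (1-α_j), and w_j^i = Σ_{i'=i}^j α_{i'}^i, the identity w_{i+k}^i - w_{i+1+k}^{i+1} = (H+1)(k+1)·Π_{j=1}^k(i+j) / Π_{j=0}^{k+1}(H+i+j) holds. -/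
/-!
Write `T_m(x) = ∏_{l<m} (x+l)/(H+x+l)` for the ratio of rising factorials. Peeling off one factor
of `1 - α_j = (j-1)/(H+j)` at a time gives `α_{i+m}^i = (H+1)/(H+i+m) · T_m(i)`, and since
`T_m - T_{m+1} = H/(H+x+m) · T_m` this is `(H+1)/H · (T_m(i) - T_{m+1}(i))`. Hence the sum telescopes to
`w_{i+k}^i = (H+1)/H · (1 - T_{k+1}(i))`, and the claimed difference is
`(H+1)/H · (T_{k+1}(i+1) - T_{k+1}(i))`, in which all but the extreme factors cancel.
-/

open Finset

noncomputable def risingRatio (H x : ℝ) (m : ℕ) : ℝ := ∏ l ∈ range m, (x + l) / (H + x + l)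

lemma risingRatio_succ (H x : ℝ) (m : ℕ) :
    risingRatio H x (m + 1) = risingRatio H x m * ((x + m) / (H + x + m)) :=
  prod_range_succ _ m

lemma risingRatio_succ' (H x : ℝ) (m : ℕ) :
    risingRatio H x (m + 1) = x / (H + x) * risingRatio H (x + 1) m := by
  simp only [risingRatio, prod_range_succ', Nat.cast_add, Nat.cast_one, Nat.cast_zero, add_zero]
  rw [mul_comm]
  congr 1
  refine prod_congr rfl fun l _ => ?_
  ring_nf

lemma risingRatio_sub_succ {H x : ℝ} {m : ℕ} (h : H + x + m ≠ 0) :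
    risingRatio H x m - risingRatio H x (m + 1) = H / (H + x + m) * risingRatio H x m := by
  rw [risingRatio_succ]
  field_simp
  ring

lemma qW_succ (H : ℝ) {τ i : ℕ} (h : i ≤ τ) :
    qW H (τ + 1) i = qW H τ i * (1 - qAlpha H (τ + 1)) := by
  rw [qW, qW, prod_Ioc_succ_top h, mul_assoc]

lemma qW_add {H : ℝ} (hH : 0 < H) (i m : ℕ) :
    qW H (i + m) i = (H + 1) / (H + i + m) * risingRatio H i m := by
  induction m with
  | zero => simp [qW, qAlpha, risingRatio]
  | succ m ih =>
    have h₁ : H + i + m ≠ 0 := by positivity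
    have h₂ : H + i + (m + 1) ≠ 0 := by positivity
    rw [← add_assoc, qW_succ H (Nat.le_add_right i m), ih, risingRatio_succ, qAlpha]
    push_cast
    field_simp
    ring

lemma qW_add_eq_sub {H : ℝ} (hH : 0 < H) (i m : ℕ) :
    qW H (i + m) i = (H + 1) / H * (risingRatio H i m - risingRatio H i (m + 1)) := by
  have h : H + i + m ≠ 0 := by positivity
  rw [qW_add hH, risingRatio_sub_succ h]
  field_simp

lemma qWsum_add {H : ℝ} (hH : 0 < H) (i k : ℕ) :
    qWsum H (i + k) i = (H + 1) / H * (1 - risingRatio H i (k + 1)) := by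
  have hIcc : Icc i (i + k) = Ico i (i + (k + 1)) := rfl
  rw [qWsum, hIcc, sum_Ico_eq_sum_range, Nat.add_sub_cancel_left]
  simp only [qW_add_eq_sub hH, ← mul_sum, sum_range_sub', risingRatio, prod_range_zero]

theorem stmt5_general (H : ℝ) (hH : 1 ≤ H) (i k : ℕ) :
    qWsum H (i + k) i - qWsum H (i + 1 + k) (i + 1)
      = (H + 1) * (k + 1) * (∏ j ∈ Icc 1 k, ((i : ℝ) + j))
        / ∏ j ∈ range (k + 2), (H + i + j) := by
  have hH₀ : 0 < H := by linarith
  rw [qWsum_add hH₀, qWsum_add hH₀]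
  push_cast
  have hnum : ∏ j ∈ Icc 1 k, ((i : ℝ) + j) = ∏ l ∈ range k, ((i : ℝ) + 1 + l) := by
    rw [show Icc 1 k = Ico 1 (k + 1) from rfl, prod_Ico_eq_prod_range, Nat.add_sub_cancel]
    refine prod_congr rfl fun l _ => ?_
    push_cast
    ring
  have hden : ∏ j ∈ range (k + 2), (H + i + j)
      = (H + i) * (∏ l ∈ range k, (H + (i + 1) + l)) * (H + (i + 1) + k) := by
    rw [prod_range_succ, prod_range_succ']
    push_cast
    ring_nf
  rw [risingRatio_succ', risingRatio_succ, hnum, hden, risingRatio, prod_div_distrib]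
  have h₁ : H + i ≠ 0 := by positivity
  have h₂ : H + (i + 1) + k ≠ 0 := by positivity
  have h₃ : ∏ l ∈ range k, (H + (i + 1 : ℝ) + l) ≠ 0 := prod_ne_zero_iff.mpr fun l _ => by positivity
  field_simp
  ring

/-- The explicit identity
`w_{i+k}^i - w_{i+1+k}^{i+1} = (H+1)(k+1) ∏_{j=1}^k (i+j) / ∏_{j=0}^{k+1} (H+i+j)`. -/
theorem stmt5 (H : ℝ) (hH : 1 ≤ H) (i k : ℕ) (hi : 1 ≤ i) :
    qWsum H (i + k) i - qWsum H (i + 1 + k) (i + 1)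
      = (H + 1) * (k + 1) * (∏ j ∈ Icc 1 k, ((i : ℝ) + j))
        / ∏ j ∈ range (k + 2), (H + i + j) :=
  stmt5_general H hH i k
end

section
/- Consider a weakly communicating average-reward MDP with optimal gain ρ* and optimal bias function h*. For any discount factor γ ∈ [0,1), the optimal value function V* of the γ-discounted MDP with the same transitions and rewards satisfies: (i) sp(V*) ≤ 2·sp(h*); (ii) for every state s, |V*(s) - ρ*/(1-γ)| ≤ sp(h*). -/
/-!
Both claims follow from the sandwich `h + ρ/(1-γ) - max h ≤ V ≤ h + ρ/(1-γ) - min h`.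
The discounted Bellman operator `T_γ` is monotone and shifts constants by `γ`, so any
supersolution `T_γ u ≤ u` dominates every subsolution (the maximum `M` of their difference
satisfies `M ≤ γ M`). Since `T_γ h` differs from `T_1 h = h + ρ` by at most `(1-γ)` times the
range of `h`, the two translates of `h` above are a super- and a subsolution.
-/

open Finset

section Comparison

variable {S : Type*} [Fintype S] [Nonempty S]

theorem le_of_le_map_of_map_le {T : (S → ℝ) → S → ℝ} {γ : ℝ} (hT : Monotone T)
    (hT_add_const : ∀ f (k : ℝ), T (f + fun _ => k) = T f + fun _ => γ * k) (hγ1 : γ < 1)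
    {f g : S → ℝ} (hf : f ≤ T f) (hg : T g ≤ g) : f ≤ g := by
  obtain ⟨s₀, -, hs₀⟩ := exists_mem_eq_sup' univ_nonempty (f - g)
  set M := univ.sup' univ_nonempty (f - g)
  have hfM : f ≤ g + fun _ => M := fun s => by
    have := le_sup' (f - g) (mem_univ s)
    simp only [Pi.sub_apply, Pi.add_apply] at this ⊢
    linarith
  have hfγM : f ≤ g + fun _ => γ * M := calc
    f ≤ T f := hf
    _ ≤ T (g + fun _ => M) := hT hfM
    _ = T g + fun _ => γ * M := hT_add_const g M
    _ ≤ g + fun _ => γ * M := by gcongr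
  have hM : M ≤ 0 := by
    have := hfγM s₀
    simp only [Pi.add_apply, Pi.sub_apply] at this hs₀
    nlinarith
  intro s
  have := le_sup' (f - g) (mem_univ s)
  simp only [Pi.sub_apply] at this
  linarith

end Comparison

section Stochastic

variable {S : Type*} [Fintype S] {p f : S → ℝ}

theorem le_sum_mul_of_le (hp0 : ∀ s, 0 ≤ p s) (hp1 : ∑ s, p s = 1) {m : ℝ}
    (hm : ∀ s, m ≤ f s) : m ≤ ∑ s, p s * f s := calc
  m = ∑ s, p s * m := by rw [← sum_mul, hp1, one_mul]
  _ ≤ ∑ s, p s * f s := sum_le_sum fun s _ => mul_le_mul_of_nonneg_left (hm s) (hp0 s)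

theorem sum_mul_le_of_le (hp0 : ∀ s, 0 ≤ p s) (hp1 : ∑ s, p s = 1) {M : ℝ}
    (hM : ∀ s, f s ≤ M) : ∑ s, p s * f s ≤ M := calc
  ∑ s, p s * f s ≤ ∑ s, p s * M := sum_le_sum fun s _ => mul_le_mul_of_nonneg_left (hM s) (hp0 s)
  _ = M := by rw [← sum_mul, hp1, one_mul]

end Stochastic

section Bellman

variable {S A : Type*} [Fintype S] [Fintype A] [Nonempty A]
  {P : S → A → S → ℝ} {r : S → A → ℝ} {γ : ℝ}

/-- The `γ`-discounted Bellman optimality operator; for `γ = 1` it is the operator of the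
average-reward optimality equation `ρ + h = bellmanOp P r 1 h`. -/
def bellmanOp (P : S → A → S → ℝ) (r : S → A → ℝ) (γ : ℝ) (f : S → ℝ) : S → ℝ :=
  fun s => univ.sup' univ_nonempty fun a => r s a + γ * ∑ s', P s a s' * f s'

theorem bellmanOp_mono (hP0 : ∀ s a s', 0 ≤ P s a s') (hγ0 : 0 ≤ γ) :
    Monotone (bellmanOp P r γ) := fun f g hfg s =>
  sup'_mono_fun fun a _ => by
    gcongr with s'
    · exact hP0 s a s'
    · exact hfg s'

theorem bellmanOp_add_const (hP1 : ∀ s a, ∑ s', P s a s' = 1) (f : S → ℝ) (k : ℝ) :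
    bellmanOp P r γ (f + fun _ => k) = bellmanOp P r γ f + fun _ => γ * k := by
  funext s
  have hsum : ∀ a, ∑ s', P s a s' * (f s' + k) = ∑ s', P s a s' * f s' + k := fun a => by
    simp only [mul_add, sum_add_distrib, ← sum_mul, hP1, one_mul]
  simp only [bellmanOp, Pi.add_apply, hsum, sup'_add]
  congr 1
  funext a
  ring

theorem bellmanOp_le_bellmanOp_one_sub (hP0 : ∀ s a s', 0 ≤ P s a s')
    (hP1 : ∀ s a, ∑ s', P s a s' = 1) (hγ1 : γ ≤ 1) {f : S → ℝ} {m : ℝ} (hm : ∀ s, m ≤ f s) :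
    bellmanOp P r γ f ≤ bellmanOp P r 1 f - fun _ => (1 - γ) * m := fun s => by
  refine sup'_le _ _ fun a _ => ?_
  have hone := le_sup' (fun a => r s a + 1 * ∑ s', P s a s' * f s') (mem_univ a)
  have havg := mul_le_mul_of_nonneg_left (le_sum_mul_of_le (hP0 s a) (hP1 s a) hm)
    (sub_nonneg.2 hγ1)
  simp only [bellmanOp, Pi.sub_apply] at hone ⊢
  linarith

theorem bellmanOp_one_sub_le_bellmanOp (hP0 : ∀ s a s', 0 ≤ P s a s')
    (hP1 : ∀ s a, ∑ s', P s a s' = 1) (hγ1 : γ ≤ 1) {f : S → ℝ} {M : ℝ} (hM : ∀ s, f s ≤ M) :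
    bellmanOp P r 1 f - (fun _ => (1 - γ) * M) ≤ bellmanOp P r γ f := fun s => by
  rw [Pi.sub_apply, sub_le_iff_le_add]
  refine sup'_le _ _ fun a _ => ?_
  have hdisc := le_sup' (fun a => r s a + γ * ∑ s', P s a s' * f s') (mem_univ a)
  have havg := mul_le_mul_of_nonneg_left (sum_mul_le_of_le (hP0 s a) (hP1 s a) hM)
    (sub_nonneg.2 hγ1)
  simp only [bellmanOp] at hdisc ⊢
  linarith

variable [Nonempty S] (hP0 : ∀ s a s', 0 ≤ P s a s') (hP1 : ∀ s a, ∑ s', P s a s' = 1)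
  (hγ0 : 0 ≤ γ) (hγ1 : γ < 1) {ρ : ℝ} {h V : S → ℝ}
  (hρh : bellmanOp P r 1 h = h + fun _ => ρ) (hV : bellmanOp P r γ V = V)
include hP0 hP1 hγ0 hγ1 hρh hV

theorem le_bias_add_of_isFixedPt {m : ℝ} (hm : ∀ s, m ≤ h s) :
    ∀ s, V s ≤ h s + (ρ / (1 - γ) - m) := by
  refine le_of_le_map_of_map_le (g := h + fun _ => ρ / (1 - γ) - m)
    (bellmanOp_mono hP0 hγ0) (bellmanOp_add_const hP1) hγ1
    hV.ge fun s => ?_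
  have hshift := congrFun (bellmanOp_add_const (r := r) (γ := γ) hP1 h (ρ / (1 - γ) - m)) s
  have hdisc := bellmanOp_le_bellmanOp_one_sub (r := r) hP0 hP1 hγ1.le hm s
  have hρ := congrFun hρh s
  have hc : (1 - γ) * (ρ / (1 - γ)) = ρ := mul_div_cancel₀ ρ (sub_ne_zero.2 hγ1.ne')
  simp only [Pi.add_apply, Pi.sub_apply] at hshift hdisc hρ ⊢
  linarith

theorem bias_add_le_of_isFixedPt {M : ℝ} (hM : ∀ s, h s ≤ M) :
    ∀ s, h s + (ρ / (1 - γ) - M) ≤ V s := by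
  refine le_of_le_map_of_map_le (f := h + fun _ => ρ / (1 - γ) - M)
    (bellmanOp_mono hP0 hγ0) (bellmanOp_add_const hP1) hγ1
    (fun s => ?_) hV.le
  have hshift := congrFun (bellmanOp_add_const (r := r) (γ := γ) hP1 h (ρ / (1 - γ) - M)) s
  have hdisc := bellmanOp_one_sub_le_bellmanOp (r := r) hP0 hP1 hγ1.le hM s
  have hρ := congrFun hρh s
  have hc : (1 - γ) * (ρ / (1 - γ)) = ρ := mul_div_cancel₀ ρ (sub_ne_zero.2 hγ1.ne')
  simp only [Pi.add_apply, Pi.sub_apply] at hshift hdisc hρ ⊢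
  linarith

end Bellman

theorem stmt6_general {S A : Type*} [Fintype S] [Fintype A] [Nonempty S] [Nonempty A]
    (P : S → A → S → ℝ) (r : S → A → ℝ)
    (hP0 : ∀ s a s', 0 ≤ P s a s') (hP1 : ∀ s a, ∑ s', P s a s' = 1)
    (γ : ℝ) (hγ0 : 0 ≤ γ) (hγ1 : γ < 1)
    (ρ : ℝ) (h : S → ℝ)
    (hBellAvg : ∀ s, ρ + h s =
      univ.sup' univ_nonempty (fun a => r s a + ∑ s', P s a s' * h s'))
    (V : S → ℝ)
    (hBellDisc : ∀ s, V s =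
      univ.sup' univ_nonempty (fun a => r s a + γ * ∑ s', P s a s' * V s')) :
    (univ.sup' univ_nonempty V - univ.inf' univ_nonempty V
        ≤ 2 * (univ.sup' univ_nonempty h - univ.inf' univ_nonempty h)) ∧
    ∀ s, |V s - ρ / (1 - γ)| ≤
      univ.sup' univ_nonempty h - univ.inf' univ_nonempty h := by
  have hρh : bellmanOp P r 1 h = h + fun _ => ρ := funext fun s => by
    simp only [bellmanOp, one_mul, Pi.add_apply, ← hBellAvg s, add_comm]
  have hV : bellmanOp P r γ V = V := funext fun s => (hBellDisc s).symm
  have hmax : ∀ s, h s ≤ univ.sup' univ_nonempty h := fun s => le_sup' h (mem_univ s)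
  have hmin : ∀ s, univ.inf' univ_nonempty h ≤ h s := fun s => inf'_le h (mem_univ s)
  have upper := le_bias_add_of_isFixedPt hP0 hP1 hγ0 hγ1 hρh hV hmin
  have lower := bias_add_le_of_isFixedPt hP0 hP1 hγ0 hγ1 hρh hV hmax
  refine ⟨?_, fun s => abs_le.2 ⟨?_, ?_⟩⟩
  · have hsup : univ.sup' univ_nonempty V ≤ univ.sup' univ_nonempty h + ρ / (1 - γ) -
        univ.inf' univ_nonempty h :=
      sup'_le _ _ fun s _ => by linarith [upper s, hmax s]
    have hinf : univ.inf' univ_nonempty h + ρ / (1 - γ) - univ.sup' univ_nonempty h ≤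
        univ.inf' univ_nonempty V :=
      le_inf' _ _ fun s _ => by linarith [lower s, hmin s]
    linarith
  · linarith [lower s, hmin s]
  · linarith [upper s, hmax s]

/-- Discounted approximation of a weakly communicating average-reward MDP
(Lemma 2 of Wei et al. 2020): if `(ρ, h)` solves the average-reward Bellman optimality
equation and `V` solves the `γ`-discounted Bellman optimality equation, then
(i) `sp(V) ≤ 2 sp(h)` and (ii) `|V(s) - ρ/(1-γ)| ≤ sp(h)` for all `s`. -/
theorem stmt6 {S A : Type*} [Fintype S] [Fintype A] [Nonempty S] [Nonempty A]
    (P : S → A → S → ℝ) (r : S → A → ℝ)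
    (hP0 : ∀ s a s', 0 ≤ P s a s') (hP1 : ∀ s a, ∑ s', P s a s' = 1)
    (hr0 : ∀ s a, 0 ≤ r s a) (hr1 : ∀ s a, r s a ≤ 1)
    (γ : ℝ) (hγ0 : 0 ≤ γ) (hγ1 : γ < 1)
    (ρ : ℝ) (h : S → ℝ)
    (hBellAvg : ∀ s, ρ + h s =
      univ.sup' univ_nonempty (fun a => r s a + ∑ s', P s a s' * h s'))
    (V : S → ℝ)
    (hBellDisc : ∀ s, V s =
      univ.sup' univ_nonempty (fun a => r s a + γ * ∑ s', P s a s' * V s')) :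
    (univ.sup' univ_nonempty V - univ.inf' univ_nonempty V
        ≤ 2 * (univ.sup' univ_nonempty h - univ.inf' univ_nonempty h)) ∧
    ∀ s, |V s - ρ / (1 - γ)| ≤
      univ.sup' univ_nonempty h - univ.inf' univ_nonempty h :=
  stmt6_general P r hP0 hP1 γ hγ0 hγ1 ρ h hBellAvg V hBellDisc
end

section
/- Let C = {v ∈ R^S : sp(v) ≤ 2·sp(h*), |V-ref(s) - V-ref(s') - (v(s) - v(s'))| ≤ w_{(s,s')} for all pairs (s,s')} be nonempty. If v1, v2 ∈ C, then the pointwise maximum v3 defined by v3(s) = max{v1(s), v2(s)} also belongs to C. -/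
open Finset

section MaxOfFunctions

variable {ι α : Type*} [AddCommGroup α] [LinearOrder α] [IsOrderedAddMonoid α]

theorem Finset.sup'_sub_inf'_max_le {s : Finset ι} (hs : s.Nonempty) (f g : ι → α) :
    s.sup' hs (fun i => max (f i) (g i)) - s.inf' hs (fun i => max (f i) (g i))
      ≤ max (s.sup' hs f - s.inf' hs f) (s.sup' hs g - s.inf' hs g) := by
  have hsup : s.sup' hs (fun i => max (f i) (g i)) ≤ max (s.sup' hs f) (s.sup' hs g) :=
    sup'_le hs _ fun i hi => max_le_max (le_sup' f hi) (le_sup' g hi)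
  have hinf : max (s.inf' hs f) (s.inf' hs g) ≤ s.inf' hs (fun i => max (f i) (g i)) :=
    le_inf' hs _ fun i hi => max_le_max (inf'_le f hi) (inf'_le g hi)
  exact (sub_le_sub hsup hinf).trans (max_sub_max_le_max _ _ _ _)

/-- Shifting `max c d` by `r` turns the claim into the `1`-Lipschitz property of `max`. -/
theorem abs_sub_sub_max_sub_max_le {r a b c d w : α}
    (hac : |r - (a - c)| ≤ w) (hbd : |r - (b - d)| ≤ w) :
    |r - (max a b - max c d)| ≤ w := by
  have key : r - (max a b - max c d) = max (c + r) (d + r) - max a b := by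
    rw [max_add_add_right]; abel
  rw [key]
  refine (abs_max_sub_max_le_max _ _ _ _).trans (max_le ?_ ?_)
  · rwa [show c + r - a = r - (a - c) by abel]
  · rwa [show d + r - b = r - (b - d) by abel]

end MaxOfFunctions

theorem stmt7_general {S : Type*} [Fintype S] [Nonempty S]
    (Vref : S → ℝ) (w : S → S → ℝ) (hstar : S → ℝ)
    (C : Set (S → ℝ))
    (hC : C = {v | (univ.sup' univ_nonempty v - univ.inf' univ_nonempty v
        ≤ 2 * (univ.sup' univ_nonempty hstar - univ.inf' univ_nonempty hstar)) ∧
      ∀ s s', |Vref s - Vref s' - (v s - v s')| ≤ w s s'})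
    (v₁ v₂ : S → ℝ) (h₁ : v₁ ∈ C) (h₂ : v₂ ∈ C) :
    (fun s => max (v₁ s) (v₂ s)) ∈ C := by
  subst hC
  obtain ⟨hspan₁, hdiff₁⟩ := h₁
  obtain ⟨hspan₂, hdiff₂⟩ := h₂
  exact ⟨(univ.sup'_sub_inf'_max_le univ_nonempty v₁ v₂).trans (max_le hspan₁ hspan₂),
    fun s s' => abs_sub_sub_max_sub_max_le (hdiff₁ s s') (hdiff₂ s s')⟩

/-- The confidence region `C` (span bound plus pairwise difference constraints around a
reference vector) is closed under pointwise maximum. -/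
theorem stmt7 {S : Type*} [Fintype S] [Nonempty S]
    (Vref : S → ℝ) (w : S → S → ℝ) (hw : ∀ s s', 0 ≤ w s s') (hstar : S → ℝ)
    (C : Set (S → ℝ))
    (hC : C = {v | (univ.sup' univ_nonempty v - univ.inf' univ_nonempty v
        ≤ 2 * (univ.sup' univ_nonempty hstar - univ.inf' univ_nonempty hstar)) ∧
      ∀ s s', |Vref s - Vref s' - (v s - v s')| ≤ w s s'})
    (hne : C.Nonempty)
    (v₁ v₂ : S → ℝ) (h₁ : v₁ ∈ C) (h₂ : v₂ ∈ C) :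
    (fun s => max (v₁ s) (v₂ s)) ∈ C :=
  stmt7_general Vref w hstar C hC v₁ v₂ h₁ h₂
end

section
/- Let C ⊆ R^S be defined by pairwise difference constraints: C = {v : sp(v) ≤ 2·sp(h*), |V-ref(s)-V-ref(s') - (v(s)-v(s'))| ≤ w_{(s,s')} ∀(s,s')}. Assume C is nonempty. Define Proj_C(v) as the (pointwise) maximum element of L(v) = {v' ∈ C : v' ≤ v}, assuming L(v) is nonempty. Then Proj_C is well defined (L(v) has a pointwise maximum lying in C), Proj_C(v) = v for v ∈ C, and Proj_C is monotone: v1 ≥ v2 implies Proj_C(v1) ≥ Proj_C(v2). -/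
/-!
Every constraint defining `C` bounds a difference `v s - v s'`, and such a bound survives
pointwise suprema: if each `v ∈ A` satisfies `v s ≤ v s' + c`, then so does `sSup A`. Hence `C` is
closed under suprema of nonempty bounded families, and the supremum of `L(v) = C ∩ Iic v`
(bounded above by `v`) is its greatest element. Uniqueness and monotonicity are formal
consequences of being a greatest element.
-/

open Finset

def CsSupClosed {α : Type*} [ConditionallyCompleteLattice α] (C : Set α) : Prop :=
  ∀ A ⊆ C, A.Nonempty → BddAbove A → sSup A ∈ C

namespace CsSupClosed

variable {α : Type*} [ConditionallyCompleteLattice α]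

theorem inter {C D : Set α} (hC : CsSupClosed C) (hD : CsSupClosed D) : CsSupClosed (C ∩ D) :=
  fun A hA hne hbdd =>
    ⟨hC A (hA.trans Set.inter_subset_left) hne hbdd,
      hD A (hA.trans Set.inter_subset_right) hne hbdd⟩

theorem iInter {ι : Sort*} {C : ι → Set α} (hC : ∀ i, CsSupClosed (C i)) :
    CsSupClosed (⋂ i, C i) :=
  fun A hA hne hbdd => Set.mem_iInter.2 fun i =>
    hC i A (hA.trans (Set.iInter_subset C i)) hne hbdd

theorem isGreatest_csSup_inter_Iic {C : Set α} (hC : CsSupClosed C) {v : α}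
    (hne : (C ∩ Set.Iic v).Nonempty) :
    IsGreatest (C ∩ Set.Iic v) (sSup (C ∩ Set.Iic v)) := by
  have hbdd : BddAbove (C ∩ Set.Iic v) := ⟨v, fun _ hx => hx.2⟩
  exact ⟨⟨hC _ Set.inter_subset_left hne hbdd, csSup_le hne fun _ hx => hx.2⟩,
    fun _ hx => le_csSup hbdd hx⟩

end CsSupClosed

section DifferenceConstraints

variable {S : Type*}

theorem csSupClosed_setOf_le_add (s s' : S) (c : ℝ) :
    CsSupClosed {v : S → ℝ | v s ≤ v s' + c} := by
  intro A hA hne hbdd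
  show sSup A s ≤ sSup A s' + c
  rw [sSup_apply_eq_sSup_image]
  refine csSup_le (hne.image _) ?_
  rintro _ ⟨v, hv, rfl⟩
  exact (hA hv : v s ≤ v s' + c).trans (add_le_add_left (le_csSup hbdd hv s') c)

theorem csSupClosed_setOf_abs_sub_le (a w : ℝ) (s s' : S) :
    CsSupClosed {v : S → ℝ | |a - (v s - v s')| ≤ w} := by
  have hsplit : {v : S → ℝ | |a - (v s - v s')| ≤ w} =
      {v | v s ≤ v s' + (w + a)} ∩ {v | v s' ≤ v s + (w - a)} := by
    ext v
    simp only [Set.mem_ofPred_eq, Set.mem_inter_iff, abs_le]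
    constructor <;> rintro ⟨h₁, h₂⟩ <;> constructor <;> linarith
  rw [hsplit]
  exact (csSupClosed_setOf_le_add s s' _).inter (csSupClosed_setOf_le_add s' s _)

theorem sup'_sub_inf'_le_iff [Fintype S] [Nonempty S] (v : S → ℝ) (K : ℝ) :
    univ.sup' univ_nonempty v - univ.inf' univ_nonempty v ≤ K ↔ ∀ s s', v s ≤ v s' + K := by
  rw [sub_le_iff_le_add, Finset.sup'_le_iff]
  refine forall_congr' fun s => ?_
  simp only [mem_univ, forall_const, ← sub_le_iff_le_add', Finset.le_inf'_iff]
  exact forall_congr' fun s' => sub_le_comm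

theorem csSupClosed_setOf_sup'_sub_inf'_le [Fintype S] [Nonempty S] (K : ℝ) :
    CsSupClosed {v : S → ℝ | univ.sup' univ_nonempty v - univ.inf' univ_nonempty v ≤ K} := by
  simp only [sup'_sub_inf'_le_iff, Set.ofPred_forall]
  exact CsSupClosed.iInter fun s => CsSupClosed.iInter fun s' => csSupClosed_setOf_le_add s s' K

end DifferenceConstraints

theorem stmt8_general {S : Type*} [Fintype S] [Nonempty S]
    (Vref : S → ℝ) (w : S → S → ℝ) (hstar : S → ℝ)
    (C : Set (S → ℝ))
    (hC : C = {v | (univ.sup' univ_nonempty v - univ.inf' univ_nonempty v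
        ≤ 2 * (univ.sup' univ_nonempty hstar - univ.inf' univ_nonempty hstar)) ∧
      ∀ s s', |Vref s - Vref s' - (v s - v s')| ≤ w s s'}) :
    (∀ v : S → ℝ, {v' | v' ∈ C ∧ v' ≤ v}.Nonempty →
      ∃ u, u ∈ C ∧ u ≤ v ∧ ∀ v' ∈ C, v' ≤ v → v' ≤ u) ∧
    (∀ v ∈ C, ∀ u, (u ∈ C ∧ u ≤ v ∧ ∀ v' ∈ C, v' ≤ v → v' ≤ u) → u = v) ∧
    (∀ v₁ v₂ u₁ u₂ : S → ℝ, v₂ ≤ v₁ →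
      (u₁ ∈ C ∧ u₁ ≤ v₁ ∧ ∀ v' ∈ C, v' ≤ v₁ → v' ≤ u₁) →
      (u₂ ∈ C ∧ u₂ ≤ v₂ ∧ ∀ v' ∈ C, v' ≤ v₂ → v' ≤ u₂) → u₂ ≤ u₁) := by
  have hCclosed : CsSupClosed C := by
    simp only [hC, Set.ofPred_and, Set.ofPred_forall]
    exact (csSupClosed_setOf_sup'_sub_inf'_le _).inter <| CsSupClosed.iInter fun s =>
      CsSupClosed.iInter fun s' => csSupClosed_setOf_abs_sub_le _ _ s s'
  refine ⟨fun v hne => ?_, ?_, ?_⟩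
  · obtain ⟨⟨huC, huv⟩, hmax⟩ := hCclosed.isGreatest_csSup_inter_Iic hne
    exact ⟨_, huC, huv, fun v' hv' hle => hmax ⟨hv', hle⟩⟩
  · rintro v hv u ⟨-, huv, hmax⟩
    exact le_antisymm huv (hmax v hv le_rfl)
  · rintro v₁ v₂ u₁ u₂ h21 ⟨-, -, hmax₁⟩ ⟨hu₂C, hu₂v₂, -⟩
    exact hmax₁ u₂ hu₂C (hu₂v₂.trans h21)

/-- The projection onto the confidence region `C` is well defined: for every `v` with
`L(v) = {v' ∈ C : v' ≤ v}` nonempty, `L(v)` has a pointwise greatest element (lying in `C`);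
this greatest element equals `v` when `v ∈ C`, and the projection is monotone. -/
theorem stmt8 {S : Type*} [Fintype S] [Nonempty S]
    (Vref : S → ℝ) (w : S → S → ℝ) (hw : ∀ s s', 0 ≤ w s s') (hstar : S → ℝ)
    (C : Set (S → ℝ))
    (hC : C = {v | (univ.sup' univ_nonempty v - univ.inf' univ_nonempty v
        ≤ 2 * (univ.sup' univ_nonempty hstar - univ.inf' univ_nonempty hstar)) ∧
      ∀ s s', |Vref s - Vref s' - (v s - v s')| ≤ w s s'})
    (hne : C.Nonempty) :
    (∀ v : S → ℝ, {v' | v' ∈ C ∧ v' ≤ v}.Nonempty →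
      ∃ u, u ∈ C ∧ u ≤ v ∧ ∀ v' ∈ C, v' ≤ v → v' ≤ u) ∧
    (∀ v ∈ C, ∀ u, (u ∈ C ∧ u ≤ v ∧ ∀ v' ∈ C, v' ≤ v → v' ≤ u) → u = v) ∧
    (∀ v₁ v₂ u₁ u₂ : S → ℝ, v₂ ≤ v₁ →
      (u₁ ∈ C ∧ u₁ ≤ v₁ ∧ ∀ v' ∈ C, v' ≤ v₁ → v' ≤ u₁) →
      (u₂ ∈ C ∧ u₂ ≤ v₂ ∧ ∀ v' ∈ C, v' ≤ v₂ → v' ≤ u₂) → u₂ ≤ u₁) :=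
  stmt8_general Vref w hstar C hC
end

section
/- Define the operator Γ: R^S → R^S by (Γv)(s) = min{ min_{s'≠s} (v(s') + Δ_{(s,s')} + ω_{(s,s')}), v(s) }, where Δ_{(s,s')} = 0 and ω_{(s,s')} = 2·sp(h*) for pairs not in the constraint set E. Then: (i) Γv ≤ v; (ii) Γ is monotone (v1 ≤ v2 implies Γv1 ≤ Γv2); (iii) Γv = v if and only if v ∈ C; and (iv) Γ^S v = Proj_C(v), i.e., iterating Γ exactly S = |S| times reaches the projection. -/
/-!
The projection `P` of `v` exists because the feasible set is closed under pointwise suprema and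
under subtracting constants; it is a fixed point of `Γ`, so by monotonicity it lies below every
iterate `Γ^k v`. If `Γ^k v` agrees with `P` at `t` and the constraint `P s ≤ P t + b s t` is
tight, then `Γ^(k+1) v` agrees with `P` at `s`. Such an `s` always exists outside the set `A` of
coordinates where `Γ^k v` agrees with `P`: otherwise all constraints leaving the complement of `A`
are slack, as is `P ≤ v` on it (where `P = v` the iterates are squeezed onto `P`), and raising `P`
by a small `ε` on the complement gives a larger feasible point below `v`. So `A` gains a
coordinate at every step until it is everything, which takes at most `|S|` steps.
-/

open Finset

lemma erase_univ_nonempty {S : Type*} [Fintype S] [Nontrivial S] [DecidableEq S] (s : S) :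
    (Finset.univ.erase s).Nonempty := by
  obtain ⟨y, hy⟩ := exists_ne s
  exact ⟨y, Finset.mem_erase.mpr ⟨hy, Finset.mem_univ y⟩⟩

/-- The relaxation operator `(Γv)(s) = min{ min_{s'≠s} (v(s') + b(s,s')), v(s) }`,
where `b(s,s') = Δ_{(s,s')} + ω_{(s,s')}` is the (extended) difference bound. -/
noncomputable def relaxOp {S : Type*} [Fintype S] [Nontrivial S] [DecidableEq S]
    (b : S → S → ℝ) (v : S → ℝ) : S → ℝ :=
  fun s => min ((Finset.univ.erase s).inf' (erase_univ_nonempty s)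
    (fun s' => v s' + b s s')) (v s)

open Filter Topology

def feasibleSet {S : Type*} (b : S → S → ℝ) : Set (S → ℝ) :=
  {v | ∀ s s', s ≠ s' → v s - v s' ≤ b s s'}

section FeasibleSet

variable {S : Type*} (b : S → S → ℝ)

lemma mem_feasibleSet_of_isLUB {Q : Set (S → ℝ)} {P : S → ℝ} (hQ : Q ⊆ feasibleSet b)
    (hP : IsLUB Q P) : P ∈ feasibleSet b := by
  intro s s' hss'
  suffices P s ≤ P s' + b s s' by linarith
  refine (isLUB_pi.1 hP s).2 ?_
  rintro _ ⟨u, hu, rfl⟩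
  linarith [hQ hu s s' hss', hP.1 hu s']

lemma sub_const_mem_feasibleSet {u : S → ℝ} (hu : u ∈ feasibleSet b) (c : ℝ) :
    (fun s => u s - c) ∈ feasibleSet b := by
  intro s s' hss'
  simpa using hu s s' hss'

lemma exists_isGreatest_feasibleSet_inter_Iic [Finite S] (hC : (feasibleSet b).Nonempty)
    (v : S → ℝ) : ∃ P, IsGreatest (feasibleSet b ∩ Set.Iic v) P := by
  obtain ⟨u, hu⟩ := hC
  obtain ⟨c, hc⟩ := (Set.finite_range fun s => u s - v s).bddAbove
  have hne : (feasibleSet b ∩ Set.Iic v).Nonempty :=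
    ⟨_, sub_const_mem_feasibleSet b hu c, fun s => by linarith [hc ⟨s, rfl⟩]⟩
  have hP := isLUB_csSup hne ⟨v, fun _ hw => hw.2⟩
  exact ⟨_, ⟨mem_feasibleSet_of_isLUB b Set.inter_subset_left hP, hP.2 fun _ hw => hw.2⟩, hP.1⟩

lemma exists_tight_of_isGreatest [Finite S] {v P : S → ℝ}
    (hP : IsGreatest (feasibleSet b ∩ Set.Iic v) P) {A : Set S} {s₀ : S} (hs₀ : s₀ ∉ A)
    (hslack : ∀ s ∉ A, P s < v s) : ∃ s ∉ A, ∃ t ∈ A, P t + b s t ≤ P s := by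
  classical
  by_contra! htight
  have hsmall : ∀ᶠ ε in 𝓝 (0 : ℝ),
      ∀ s, s ∉ A → ε < v s - P s ∧ ∀ t ∈ A, ε < P t + b s t - P s :=
    eventually_all.2 fun s => eventually_imp_distrib_left.2 fun hs =>
      (eventually_lt_nhds (sub_pos.2 (hslack s hs))).and <|
        eventually_all.2 fun t => eventually_imp_distrib_left.2 fun ht =>
          eventually_lt_nhds (sub_pos.2 (htight s hs t ht))
  obtain ⟨ε, hε, hεpos⟩ := (hsmall.filter_mono nhdsWithin_le_nhds).and
    (self_mem_nhdsWithin (s := Set.Ioi 0)) |>.exists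
  have hbump : (fun s => if s ∈ A then P s else P s + ε) ∈ feasibleSet b ∩ Set.Iic v := by
    refine ⟨fun s s' hss' => ?_, fun s => ?_⟩
    · have hPss' := hP.1.1 s s' hss'
      by_cases hs : s ∈ A <;> by_cases hs' : s' ∈ A <;> simp only [hs, hs', if_true, if_false]
      · exact hPss'
      · linarith
      · linarith [(hε s hs).2 s' hs']
      · linarith
    · by_cases hs : s ∈ A <;> simp only [hs, if_true, if_false]
      · exact hP.1.2 s
      · linarith [(hε s hs).1]
  have := hP.2 hbump s₀
  simp only [hs₀, if_false] at this
  linarith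

end FeasibleSet

lemma Finset.eq_univ_of_card_lt_card_succ {α : Type*} [Fintype α] (A : ℕ → Finset α)
    (hmono : ∀ k, A k ⊆ A (k + 1)) (hgrow : ∀ k, A k ≠ univ → #(A k) < #(A (k + 1))) :
    A (Fintype.card α) = univ := by
  have hcard : ∀ k, min k (Fintype.card α) ≤ #(A k) := by
    intro k
    induction k with
    | zero => simp
    | succ k ih =>
      by_cases hk : A k = univ
      · have : A (k + 1) = univ := univ_subset_iff.1 (hk ▸ hmono k)
        rw [this, card_univ]
        exact min_le_right _ _
      · have := hgrow k hk
        omega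
  exact eq_univ_of_card _ (le_antisymm (card_le_univ _) (by simpa using hcard (Fintype.card α)))

noncomputable def agreeSet {S : Type*} [Fintype S] (w P : S → ℝ) : Finset S :=
  {s | w s = P s}

lemma mem_agreeSet {S : Type*} [Fintype S] {w P : S → ℝ} {s : S} :
    s ∈ agreeSet w P ↔ w s = P s := by
  simp [agreeSet]

section RelaxOp

variable {S : Type*} [Fintype S] [Nontrivial S] [DecidableEq S] (b : S → S → ℝ)

lemma relaxOp_le (v : S → ℝ) : relaxOp b v ≤ v := fun _ => min_le_right _ _

lemma relaxOp_apply_le_add (v : S → ℝ) {s t : S} (h : t ≠ s) :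
    relaxOp b v s ≤ v t + b s t :=
  (min_le_left _ _).trans (inf'_le _ (mem_erase.2 ⟨h, mem_univ t⟩))

lemma relaxOp_mono : Monotone (relaxOp b) := fun _ _ h s =>
  min_le_min (le_inf' _ _ fun t ht => (inf'_le _ ht).trans (add_le_add_left (h t) _)) (h s)

lemma relaxOp_eq_self_iff (v : S → ℝ) : relaxOp b v = v ↔ v ∈ feasibleSet b := by
  constructor
  · intro h s s' hss'
    have := relaxOp_apply_le_add b v hss'.symm
    rw [h] at this
    linarith
  · intro h
    funext s
    refine le_antisymm (min_le_right _ _) (le_min (le_inf' _ _ fun t ht => ?_) le_rfl)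
    linarith [h s t (mem_erase.1 ht).1.symm]

variable {b}

lemma le_relaxOp_of_mem_feasibleSet {P w : S → ℝ} (hP : P ∈ feasibleSet b) (hPw : P ≤ w) :
    P ≤ relaxOp b w :=
  (relaxOp_eq_self_iff b P).2 hP ▸ relaxOp_mono b hPw

lemma agreeSet_subset_agreeSet_relaxOp {P w : S → ℝ} (hP : P ∈ feasibleSet b) (hPw : P ≤ w) :
    agreeSet w P ⊆ agreeSet (relaxOp b w) P := fun s hs => by
  rw [mem_agreeSet] at hs ⊢
  linarith [le_relaxOp_of_mem_feasibleSet hP hPw s, relaxOp_le b w s]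

lemma card_agreeSet_lt_card_agreeSet_relaxOp {v P w : S → ℝ}
    (hP : IsGreatest (feasibleSet b ∩ Set.Iic v) P) (hPw : P ≤ w) (hwv : w ≤ v)
    (hA : agreeSet w P ≠ univ) : #(agreeSet w P) < #(agreeSet (relaxOp b w) P) := by
  obtain ⟨s₀, -, hs₀⟩ := exists_of_ssubset (ssubset_univ_iff.2 hA)
  have hslack : ∀ s ∉ agreeSet w P, P s < v s := fun s hs =>
    (hP.1.2 s).lt_of_ne fun h => hs (mem_agreeSet.2 (le_antisymm (h ▸ hwv s) (hPw s)))
  obtain ⟨s, hs, t, ht, htight⟩ := exists_tight_of_isGreatest b hP (A := agreeSet w P) hs₀ hslack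
  have hts : t ≠ s := fun hts => hs (hts ▸ ht)
  refine card_lt_card <| (ssubset_iff_of_subset
    (agreeSet_subset_agreeSet_relaxOp hP.1.1 hPw)).2 ⟨s, mem_agreeSet.2 ?_, hs⟩
  linarith [relaxOp_apply_le_add b w hts, le_relaxOp_of_mem_feasibleSet hP.1.1 hPw s,
    mem_agreeSet.1 ht]

lemma relaxOp_iterate_card_eq {v P : S → ℝ} (hP : IsGreatest (feasibleSet b ∩ Set.Iic v) P) :
    (relaxOp b)^[Fintype.card S] v = P := by
  have hPle : ∀ k, P ≤ (relaxOp b)^[k] v := fun k =>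
    Function.iterate_fixed ((relaxOp_eq_self_iff b P).2 hP.1.1) k ▸
      (relaxOp_mono b).iterate k hP.1.2
  have hle : ∀ k, (relaxOp b)^[k] v ≤ v := fun k =>
    Function.iterate_le_id_of_le_id (relaxOp_le b) k v
  have hall := Finset.eq_univ_of_card_lt_card_succ (fun k => agreeSet ((relaxOp b)^[k] v) P)
    (fun k => Function.iterate_succ_apply' (relaxOp b) k v ▸
      agreeSet_subset_agreeSet_relaxOp hP.1.1 (hPle k))
    (fun k hk => Function.iterate_succ_apply' (relaxOp b) k v ▸
      card_agreeSet_lt_card_agreeSet_relaxOp hP (hPle k) (hle k) hk)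
  funext s
  exact mem_agreeSet.1 (eq_univ_iff_forall.1 hall s)

end RelaxOp

/-- Properties of the relaxation operator `Γ` used to compute the projection onto
`C = {v : v(s) - v(s') ≤ b(s,s') ∀ s ≠ s'}`:
(i) `Γv ≤ v`; (ii) `Γ` is monotone; (iii) `Γv = v ↔ v ∈ C`;
(iv) `Γ^{|S|} v` is the projection of `v` onto `C`, i.e. the greatest element of
`{u ∈ C : u ≤ v}`. -/
theorem stmt9 {S : Type*} [Fintype S] [DecidableEq S] [Nontrivial S]
    (b : S → S → ℝ)
    (C : Set (S → ℝ)) (hCdef : C = {v | ∀ s s', s ≠ s' → v s - v s' ≤ b s s'})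
    (hne : C.Nonempty) :
    (∀ v : S → ℝ, relaxOp b v ≤ v) ∧
    (∀ v₁ v₂ : S → ℝ, v₁ ≤ v₂ → relaxOp b v₁ ≤ relaxOp b v₂) ∧
    (∀ v : S → ℝ, relaxOp b v = v ↔ v ∈ C) ∧
    (∀ v : S → ℝ, (relaxOp b)^[Fintype.card S] v ∈ C ∧
      (relaxOp b)^[Fintype.card S] v ≤ v ∧
      ∀ u ∈ C, u ≤ v → u ≤ (relaxOp b)^[Fintype.card S] v) := by
  subst hCdef
  refine ⟨relaxOp_le b, fun _ _ h => relaxOp_mono b h, relaxOp_eq_self_iff b, fun v => ?_⟩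
  obtain ⟨P, hP⟩ := exists_isGreatest_feasibleSet_inter_Iic b hne v
  rw [relaxOp_iterate_card_eq hP]
  exact ⟨hP.1.1, hP.1.2, fun u hu huv => hP.2 ⟨hu, huv⟩⟩
end

section
/- Maintain a tree-structured edge set by the following update: given a current tree E on vertex set S and a new weighted edge e' = (s,s') with weight ω, if e' ∈ E and ω < ω_{e'}, replace the weight; otherwise add e' to E and, if a cycle is created, delete an edge of maximum weight in that cycle. Claim: if at some round the pair (s,s') is inserted with weight w, then at every later round k, every edge e on the unique path in the current tree E^k connecting s and s' satisfies ω_e^k ≤ w (taking the smallest weight w ever inserted for (s,s')). -/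
/-!
Write `G.sublevel W t` for the subgraph of edges of weight at most `t`. The invariant is that
after round `m` the endpoints of every pair inserted at round `m` stay connected in the
sublevel graph at the weight it was inserted with. Lowering weights only enlarges sublevel
graphs, and deleting a heaviest edge `f` of a cycle does not disconnect any of them: if `f`
has weight at most `t`, so does the rest of the cycle, which is a detour around `f`. In a tree
the unique path between two vertices lies in every subgraph connecting them, so its edges have
weight at most `w m`. The update keeps a tree: it stays connected because the deleted edge lies
on a cycle, and it keeps the edge count of a tree.
-/

namespace SimpleGraph

variable {V : Type*} {G H : SimpleGraph V}

theorem Reachable.of_forall_adj_reachable {u v : V} (h : ∀ x y, G.Adj x y → H.Reachable x y)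
    (huv : G.Reachable u v) : H.Reachable u v := by
  obtain ⟨p⟩ := huv
  induction p with
  | nil => rfl
  | cons hxy _ ih => exact (h _ _ hxy).trans ih

theorem IsAcyclic.mem_edgeSet_of_mem_edges_of_isPath (hG : G.IsAcyclic) (hHG : H ≤ G) {u v : V}
    (huv : H.Reachable u v) {p : G.Walk u v} (hp : p.IsPath) {e : Sym2 V} (he : e ∈ p.edges) :
    e ∈ H.edgeSet := by
  classical
  obtain ⟨q⟩ := huv
  have hpq : p = (q.mapLe hHG).toPath :=
    congrArg Subtype.val (hG.subsingleton_path u v |>.elim ⟨p, hp⟩ _)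
  subst hpq
  have := Walk.edges_toPath_subset_edges _ he
  simp only [Walk.edges_map, Hom.coe_ofLE, Sym2.map_id, List.map_id_fun, id_eq] at this
  exact q.edges_subset_edgeSet this

theorem IsTree.sup_edge_deleteEdges_of_mem_isCycle [Finite V] (hG : G.IsTree) {a b : V}
    (hab : a ≠ b) (he : s(a, b) ∉ G.edgeSet) {u : V} {c : (G ⊔ edge a b).Walk u u}
    (hc : c.IsCycle) {f : Sym2 V} (hf : f ∈ c.edges) :
    ((G ⊔ edge a b).deleteEdges {f}).IsTree := by
  have hfE := c.edges_subset_edgeSet hf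
  rw [isTree_iff_connected_and_card]
  constructor
  · induction f using Sym2.ind with | _ x y => ?_
    exact (hG.connected.mono le_sup_left).connected_delete_edge_of_not_isBridge
      fun hbr => hbr.notMem_edges_of_isCycle hc hf
  · have hcard := (isTree_iff_connected_and_card.mp hG).2
    rw [Nat.card_coe_set_eq] at hcard ⊢
    rw [edgeSet_deleteEdges, Set.ncard_sdiff_singleton_add_one hfE, edgeSet_sup,
      edgeSet_edge_of_ne hab, Set.union_singleton, Set.ncard_insert_of_notMem he, hcard]

def sublevel (G : SimpleGraph V) (W : Sym2 V → ℝ) (t : ℝ) : SimpleGraph V :=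
  G.deleteEdges {e | t < W e}

variable {W W' : Sym2 V → ℝ} {s t : ℝ}

theorem mem_edgeSet_sublevel {e : Sym2 V} :
    e ∈ (G.sublevel W t).edgeSet ↔ e ∈ G.edgeSet ∧ W e ≤ t := by
  simp [sublevel]

theorem sublevel_adj {x y : V} : (G.sublevel W t).Adj x y ↔ G.Adj x y ∧ W s(x, y) ≤ t := by
  simp [sublevel]

theorem sublevel_le : G.sublevel W t ≤ G := deleteEdges_le _

theorem sublevel_mono (hGH : G ≤ H) (hW : ∀ e ∈ G.edgeSet, W' e ≤ W e) :
    G.sublevel W t ≤ H.sublevel W' t := fun x y hxy => by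
  rw [sublevel_adj] at hxy ⊢
  exact ⟨hGH hxy.1, (hW _ hxy.1).trans hxy.2⟩

theorem sublevel_deleteEdges_mono (hst : s ≤ t) (f : Sym2 V) :
    (G.sublevel W s).deleteEdges {f} ≤ (G.deleteEdges {f}).sublevel W t := fun x y hxy => by
  simp only [deleteEdges_adj, sublevel_adj] at hxy ⊢
  exact ⟨⟨hxy.1.1, hxy.2⟩, hxy.1.2.trans hst⟩

theorem Reachable.sublevel_deleteEdges_of_isCycle {u : V} {c : G.Walk u u} (hc : c.IsCycle)
    {f : Sym2 V} (hf : f ∈ c.edges) (hmax : ∀ e ∈ c.edges, W e ≤ W f) {x y : V}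
    (hxy : (G.sublevel W t).Reachable x y) : ((G.deleteEdges {f}).sublevel W t).Reachable x y := by
  refine hxy.of_forall_adj_reachable fun v₁ v₂ hadj => ?_
  rw [sublevel_adj] at hadj
  by_cases hf₁₂ : s(v₁, v₂) = f
  · subst hf₁₂
    have hc' : ∀ e ∈ c.edges, e ∈ (G.sublevel W (W s(v₁, v₂))).edgeSet := fun e he =>
      mem_edgeSet_sublevel.mpr ⟨c.edges_subset_edgeSet he, hmax e he⟩
    have hdetour := (adj_and_reachable_delete_edges_iff_exists_cycle.mpr
      ⟨u, c.transfer _ hc', hc.transfer hc', by rwa [Walk.edges_transfer]⟩).2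
    exact hdetour.mono (sublevel_deleteEdges_mono hadj.2 _)
  · exact Adj.reachable (sublevel_adj.mpr ⟨(deleteEdges_adj ..).mpr ⟨hadj.1, hf₁₂⟩, hadj.2⟩)

structure IsTreeUpdate [DecidableEq V] (G : SimpleGraph V) (W : Sym2 V → ℝ) (a b : V) (w : ℝ)
    (G' : SimpleGraph V) (W' : Sym2 V → ℝ) : Prop where
  replace : s(a, b) ∈ G.edgeSet → w < W s(a, b) →
    G' = G ∧ W' = fun e => if e = s(a, b) then w else W e
  keep : s(a, b) ∈ G.edgeSet → ¬ w < W s(a, b) → G' = G ∧ W' = W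
  insert : s(a, b) ∉ G.edgeSet →
    (W' = fun e => if e = s(a, b) then w else W e) ∧
    ∃ (x : V) (c : (G ⊔ edge a b).Walk x x), c.IsCycle ∧
      ∃ f ∈ c.edges, (∀ e ∈ c.edges, W' e ≤ W' f) ∧ G' = (G ⊔ edge a b).deleteEdges {f}

namespace IsTreeUpdate

variable [DecidableEq V] {G' : SimpleGraph V} {a b : V} {w : ℝ}

theorem of_mem_edgeSet (hu : IsTreeUpdate G W a b w G' W') (he : s(a, b) ∈ G.edgeSet) :
    G' = G ∧ (∀ e, W' e ≤ W e) ∧ W' s(a, b) ≤ w := by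
  by_cases hlt : w < W s(a, b)
  · obtain ⟨rfl, rfl⟩ := hu.replace he hlt
    refine ⟨rfl, fun e => ?_, by simp⟩
    dsimp only
    split_ifs with h
    · exact h ▸ hlt.le
    · rfl
  · obtain ⟨rfl, rfl⟩ := hu.keep he hlt
    exact ⟨rfl, fun _ => le_rfl, not_lt.mp hlt⟩

theorem isTree [Finite V] (hu : IsTreeUpdate G W a b w G' W') (hG : G.IsTree) (hab : a ≠ b) :
    G'.IsTree := by
  by_cases he : s(a, b) ∈ G.edgeSet
  · exact (hu.of_mem_edgeSet he).1 ▸ hG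
  · obtain ⟨-, x, c, hc, f, hf, -, rfl⟩ := hu.insert he
    exact hG.sup_edge_deleteEdges_of_mem_isCycle hab he hc hf

theorem reachable_sublevel (hu : IsTreeUpdate G W a b w G' W') {u v : V}
    (huv : (G.sublevel W t).Reachable u v) : (G'.sublevel W' t).Reachable u v := by
  by_cases he : s(a, b) ∈ G.edgeSet
  · obtain ⟨rfl, hW, -⟩ := hu.of_mem_edgeSet he
    exact huv.mono (sublevel_mono le_rfl fun e _ => hW e)
  · obtain ⟨rfl, x, c, hc, f, hf, hmax, rfl⟩ := hu.insert he
    refine (huv.mono (sublevel_mono le_sup_left fun e he' => ?_)).sublevel_deleteEdges_of_isCycle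
      hc hf hmax
    rw [if_neg (ne_of_mem_of_not_mem he' he)]

theorem reachable_sublevel_self (hu : IsTreeUpdate G W a b w G' W') (hab : a ≠ b) :
    (G'.sublevel W' w).Reachable a b := by
  by_cases he : s(a, b) ∈ G.edgeSet
  · obtain ⟨rfl, -, hw⟩ := hu.of_mem_edgeSet he
    exact Adj.reachable (sublevel_adj.mpr ⟨he, hw⟩)
  · obtain ⟨rfl, x, c, hc, f, hf, hmax, rfl⟩ := hu.insert he
    refine Reachable.sublevel_deleteEdges_of_isCycle hc hf hmax (Adj.reachable ?_)
    exact sublevel_adj.mpr ⟨Or.inr ((edge_adj ..).mpr ⟨Or.inl ⟨rfl, rfl⟩, hab⟩), by simp⟩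

end IsTreeUpdate

end SimpleGraph

open SimpleGraph

/-- Invariant of the tree-update procedure `UpdateG`: a tree with weighted edges is
maintained; at round `n` the pair `(a n, b n)` with weight `w n` is inserted — if the edge
is already present its weight is lowered when possible, otherwise the edge is added and a
maximum-weight edge of the created cycle is deleted. Then for every insertion round `m`
and every later round `k`, every edge on the (unique) path in the tree `T k` connecting
`a m` and `b m` has weight at most `w m`. -/
theorem stmt11 {V : Type*} [Fintype V] [DecidableEq V]
    (T : ℕ → SimpleGraph V) (W : ℕ → Sym2 V → ℝ)
    (a b : ℕ → V) (w : ℕ → ℝ)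
    (hab : ∀ n, a n ≠ b n)
    (htree : (T 0).IsTree)
    (hrep : ∀ n, s(a n, b n) ∈ (T n).edgeSet → w n < W n (s(a n, b n)) →
      T (n + 1) = T n ∧
        W (n + 1) = fun e => if e = s(a n, b n) then w n else W n e)
    (hkeep : ∀ n, s(a n, b n) ∈ (T n).edgeSet → ¬ w n < W n (s(a n, b n)) →
      T (n + 1) = T n ∧ W (n + 1) = W n)
    (hins : ∀ n, s(a n, b n) ∉ (T n).edgeSet →
      (W (n + 1) = fun e => if e = s(a n, b n) then w n else W n e) ∧
      ∃ (x : V) (c : (T n ⊔ fromEdgeSet {s(a n, b n)}).Walk x x), c.IsCycle ∧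
        ∃ emax ∈ c.edges,
          (∀ e' ∈ c.edges, W (n + 1) e' ≤ W (n + 1) emax) ∧
          T (n + 1) = (T n ⊔ fromEdgeSet {s(a n, b n)}).deleteEdges {emax}) :
    ∀ m k, m < k → ∀ (p : (T k).Walk (a m) (b m)), p.IsPath →
      ∀ e ∈ p.edges, W k e ≤ w m := by
  have hu : ∀ n, IsTreeUpdate (T n) (W n) (a n) (b n) (w n) (T (n + 1)) (W (n + 1)) :=
    fun n => ⟨hrep n, hkeep n, hins n⟩
  have hT : ∀ k, (T k).IsTree := Nat.rec htree fun k hk => (hu k).isTree hk (hab k)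
  have hreach : ∀ m k, m < k → ((T k).sublevel (W k) (w m)).Reachable (a m) (b m) := by
    intro m k hmk
    induction k, hmk using Nat.le_induction with
    | base => exact (hu m).reachable_sublevel_self (hab m)
    | succ k _ ih => exact (hu k).reachable_sublevel ih
  intro m k hmk p hp e he
  exact (mem_edgeSet_sublevel.mp ((hT k).isAcyclic.mem_edgeSet_of_mem_edges_of_isPath
    sublevel_le (hreach m k hmk) hp he)).2
end

section
/- In a weakly communicating average-reward MDP with optimal gain ρ* and optimal bias h*, for every state s and every horizon t ≥ 1, the optimal t-step (finite-horizon, undiscounted) value function V_t* satisfies |t·ρ* − V_t*(s)| ≤ sp(h*). -/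
/-! The Bellman operator `T` is monotone and commutes with adding constants, and the
optimality equation says `T h* = h* + ρ*`, so `Tᵗ h* = h* + t ρ*`. Since
`h* - max h* ≤ 0 ≤ h* - min h*`, applying `Tᵗ` gives
`h* + t ρ* - max h* ≤ V_t* = Tᵗ 0 ≤ h* + t ρ* - min h*`. -/

open Finset

section Iterate

variable {S : Type*} {T : (S → ℝ) → S → ℝ}

lemma iterate_le_add_of_le (hmono : Monotone T)
    (hadd : ∀ v c, T (fun s => v s + c) = fun s => T v s + c)
    {v w : S → ℝ} {c : ℝ} (hvw : ∀ s, v s ≤ w s + c) (n : ℕ) (s : S) :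
    T^[n] v s ≤ T^[n] w s + c := by
  induction n generalizing s with
  | zero => exact hvw s
  | succ n ih =>
    simp only [Function.iterate_succ_apply']
    rw [← congrFun (hadd _ c) s]
    exact hmono (fun s => ih s) s

lemma iterate_eq_add_of_eq_add (hadd : ∀ v c, T (fun s => v s + c) = fun s => T v s + c)
    {h : S → ℝ} {ρ : ℝ} (hfix : T h = fun s => h s + ρ) (n : ℕ) :
    T^[n] h = fun s => h s + n * ρ := by
  induction n with
  | zero => simp
  | succ n ih =>
    rw [Function.iterate_succ_apply', ih, hadd, hfix]
    funext s
    push_cast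
    ring

end Iterate

section Bellman

variable {S A : Type*} [Fintype S] [Fintype A] [Nonempty A]

noncomputable def bellman (P : S → A → S → ℝ) (r : S → A → ℝ) (v : S → ℝ) : S → ℝ :=
  fun s => univ.sup' univ_nonempty fun a => r s a + ∑ s', P s a s' * v s'

variable {P : S → A → S → ℝ} (r : S → A → ℝ)

lemma bellman_mono (hP0 : ∀ s a s', 0 ≤ P s a s') : Monotone (bellman P r) :=
  fun _ _ hvw s => sup'_mono_fun fun a _ =>
    add_le_add_right (sum_le_sum fun s' _ => mul_le_mul_of_nonneg_left (hvw s') (hP0 s a s')) _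

lemma bellman_add_const (hP1 : ∀ s a, ∑ s', P s a s' = 1) (v : S → ℝ) (c : ℝ) :
    bellman P r (fun s => v s + c) = fun s => bellman P r v s + c := by
  funext s
  have hshift : ∀ a, ∑ s', P s a s' * (v s' + c) = ∑ s', P s a s' * v s' + c := fun a => by
    simp only [mul_add, sum_add_distrib, ← sum_mul, hP1, one_mul]
  simp only [bellman, hshift, ← add_assoc, sup'_add]

end Bellman

theorem stmt18_general {S A : Type*} [Fintype S] [Fintype A] [Nonempty S] [Nonempty A]
    (P : S → A → S → ℝ) (r : S → A → ℝ)
    (hP0 : ∀ s a s', 0 ≤ P s a s') (hP1 : ∀ s a, ∑ s', P s a s' = 1)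
    (ρ : ℝ) (h : S → ℝ)
    (hBellAvg : ∀ s, ρ + h s =
      univ.sup' univ_nonempty (fun a => r s a + ∑ s', P s a s' * h s'))
    (V : ℕ → S → ℝ)
    (hV0 : ∀ s, V 0 s = 0)
    (hVrec : ∀ t s, V (t + 1) s =
      univ.sup' univ_nonempty (fun a => r s a + ∑ s', P s a s' * V t s')) :
    ∀ t : ℕ, 1 ≤ t → ∀ s,
      |(t : ℝ) * ρ - V t s| ≤
        univ.sup' univ_nonempty h - univ.inf' univ_nonempty h := by
  have hmono := bellman_mono r hP0
  have hadd := bellman_add_const r hP1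
  have hV : ∀ t, V t = (bellman P r)^[t] 0 := fun t => by
    induction t with
    | zero => exact funext hV0
    | succ t ih => rw [Function.iterate_succ_apply', ← ih]; exact funext (hVrec t)
  have hh : ∀ t, (bellman P r)^[t] h = fun s => h s + t * ρ :=
    iterate_eq_add_of_eq_add hadd (funext fun s => (hBellAvg s).symm.trans (add_comm _ _))
  have hmin : ∀ s, univ.inf' univ_nonempty h ≤ h s := fun s => inf'_le h (mem_univ s)
  have hmax : ∀ s, h s ≤ univ.sup' univ_nonempty h := fun s => le_sup' h (mem_univ s)
  intro t _ s
  have hupper := iterate_le_add_of_le hmono hadd (v := 0) (w := h)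
    (c := -univ.inf' univ_nonempty h) (fun s => by simpa using hmin s) t s
  have hlower := iterate_le_add_of_le hmono hadd (v := h) (w := 0)
    (c := univ.sup' univ_nonempty h) (fun s => by simpa using hmax s) t s
  rw [hh, ← hV] at hupper hlower
  rw [abs_sub_le_iff]
  constructor <;> linarith [hmin s, hmax s]

/-- Finite-horizon approximation of the optimal average reward (Lemma 13 of Wei et al.
2021): in a weakly communicating MDP, the optimal `t`-step undiscounted value function
satisfies `|t ρ* - V_t*(s)| ≤ sp(h*)` for every state `s` and horizon `t ≥ 1`. -/
theorem stmt18 {S A : Type*} [Fintype S] [Fintype A] [Nonempty S] [Nonempty A]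
    (P : S → A → S → ℝ) (r : S → A → ℝ)
    (hP0 : ∀ s a s', 0 ≤ P s a s') (hP1 : ∀ s a, ∑ s', P s a s' = 1)
    (hr0 : ∀ s a, 0 ≤ r s a) (hr1 : ∀ s a, r s a ≤ 1)
    (ρ : ℝ) (h : S → ℝ)
    (hBellAvg : ∀ s, ρ + h s =
      univ.sup' univ_nonempty (fun a => r s a + ∑ s', P s a s' * h s'))
    (V : ℕ → S → ℝ)
    (hV0 : ∀ s, V 0 s = 0)
    (hVrec : ∀ t s, V (t + 1) s =
      univ.sup' univ_nonempty (fun a => r s a + ∑ s', P s a s' * V t s')) :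
    ∀ t : ℕ, 1 ≤ t → ∀ s,
      |(t : ℝ) * ρ - V t s| ≤
        univ.sup' univ_nonempty h - univ.inf' univ_nonempty h :=
  stmt18_general P r hP0 hP1 ρ h hBellAvg V hV0 hVrec
end

section
/- Let (M_n)_{n≥0} be a martingale with M_0 = 0 and |M_n − M_{n−1}| ≤ c. Let Var_n = Σ_{k=1}^n E[(M_k − M_{k−1})² | F_{k−1}]. Then for any x, y > 0, P[∃n: M_n ≥ x and Var_n ≤ y] ≤ exp(−x²/(2(y + cx))). -/
/-!
Put `λ = x / (y + c x)` and `h = λ² / (2 (1 - λ c))`. The exponential series gives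
`exp u ≤ 1 + u + u² / (2 (1 - v))` for `|u| ≤ v < 1`; since the increments `D_k = M_{k+1} - M_k`
satisfy `E[D_k | ℱ_k] = 0`, this yields
`E[exp (λ D_k) | ℱ_k] ≤ 1 + h E[D_k² | ℱ_k] ≤ exp (h E[D_k² | ℱ_k])`.
Hence `Z_n = exp (λ M_n - h Var_n)` is a nonnegative supermartingale with `Z_0 = 1`. On the event
in question some `Z_n` is at least `exp (λ x - h y)`, so Ville's maximal inequality for nonnegative
supermartingales bounds its probability by `exp (-(λ x - h y))`, and the choice of `λ` makes
`λ x - h y = x² / (2 (y + c x))`.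
-/

open MeasureTheory Finset

namespace Real

open Nat in
theorem exp_le_one_add_add_sq_div {u v : ℝ} (huv : |u| ≤ v) (hv : v < 1) :
    exp u ≤ 1 + u + u ^ 2 / (2 * (1 - v)) := by
  have hv0 : 0 ≤ v := (abs_nonneg u).trans huv
  have hsum := summable_pow_div_factorial u
  have hterm (n : ℕ) : u ^ (n + 2) / (n + 2)! ≤ u ^ 2 / 2 * v ^ n := by
    have hfac : (2 : ℝ) ≤ (n + 2)! := by exact_mod_cast factorial_le (by omega : 2 ≤ n + 2)
    calc u ^ (n + 2) / (n + 2)! ≤ |u| ^ (n + 2) / (n + 2)! := by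
          gcongr ?_ / _
          exact (le_abs_self _).trans (abs_pow u _).le
      _ ≤ |u| ^ (n + 2) / 2 := by gcongr
      _ = u ^ 2 / 2 * |u| ^ n := by rw [pow_add, sq_abs]; ring
      _ ≤ u ^ 2 / 2 * v ^ n := by gcongr
  have htail : ∑' n : ℕ, u ^ (n + 2) / (n + 2)! ≤ u ^ 2 / (2 * (1 - v)) :=
    calc ∑' n : ℕ, u ^ (n + 2) / (n + 2)! ≤ ∑' n : ℕ, u ^ 2 / 2 * v ^ n :=
          ((summable_nat_add_iff 2).2 hsum).tsum_le_tsum hterm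
            ((summable_geometric_of_lt_one hv0 hv).mul_left _)
      _ = u ^ 2 / (2 * (1 - v)) := by
          rw [tsum_mul_left, tsum_geometric_of_lt_one hv0 hv]
          field_simp
  rw [exp_eq_exp_ℝ, NormedSpace.exp_eq_tsum_div]
  beta_reduce
  rw [← hsum.sum_add_tsum_nat_add 2]
  simp only [sum_range_succ, sum_range_zero]
  norm_num at htail ⊢
  linarith

end Real

namespace MeasureTheory.Supermartingale

variable {Ω : Type*} {m0 : MeasurableSpace Ω} {μ : Measure Ω} [IsFiniteMeasure μ]
  {ℱ : Filtration ℕ m0} {Z : ℕ → Ω → ℝ}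

theorem mul_measureReal_exists_le_ge_le (hZ : Supermartingale Z ℱ μ) (hnonneg : 0 ≤ Z) (a : ℝ)
    (n : ℕ) : a * μ.real {ω | ∃ k ≤ n, a ≤ Z k ω} ≤ ∫ ω, Z 0 ω ∂μ := by
  -- `τ` is the first time in `[0, n]` at which `Z` reaches `[a, ∞)`, and `n` if there is none.
  set τ : Ω → WithTop ℕ := fun ω => (hittingBtwn Z (Set.Ici a) 0 n ω : ℕ)
  have hτ : IsStoppingTime ℱ τ :=
    hZ.stronglyAdapted.adapted.isStoppingTime_hittingBtwn measurableSet_Ici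
  have hτn (ω : Ω) : τ ω ≤ n := WithTop.coe_le_coe.2 (hittingBtwn_le ω)
  have hneg_stopped : stoppedValue (-Z) τ = -stoppedValue Z τ := rfl
  have hint : Integrable (stoppedValue Z τ) μ := by
    simpa [hneg_stopped] using (hZ.neg.integrable_stoppedValue hτ hτn).neg
  have hmeas : MeasurableSet {ω | ∃ k ≤ n, a ≤ Z k ω} := by
    simp only [Set.ofPred_exists]
    exact .iUnion fun k => (MeasurableSet.const _).inter <|
      measurableSet_le measurable_const ((hZ.stronglyAdapted k).mono (ℱ.le k)).measurable
  have hstopped_ge : ∀ ω ∈ {ω | ∃ k ≤ n, a ≤ Z k ω}, a ≤ stoppedValue Z τ ω :=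
    fun ω ⟨k, hk, hak⟩ => stoppedValue_hittingBtwn_mem ⟨k, ⟨Nat.zero_le k, hk⟩, hak⟩
  have hoptional : ∫ ω, stoppedValue Z τ ω ∂μ ≤ ∫ ω, Z 0 ω ∂μ := by
    have := hZ.neg.expected_stoppedValue_mono (isStoppingTime_const ℱ 0) hτ
      (fun ω => WithTop.coe_le_coe.2 (Nat.zero_le _)) hτn
    simp only [stoppedValue, Pi.neg_apply, integral_neg, neg_le_neg_iff] at this
    exact this
  calc a * μ.real {ω | ∃ k ≤ n, a ≤ Z k ω}
      ≤ ∫ ω in {ω | ∃ k ≤ n, a ≤ Z k ω}, stoppedValue Z τ ω ∂μ :=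
        setIntegral_ge_of_const_le_real hmeas (measure_ne_top _ _) hstopped_ge hint.integrableOn
    _ ≤ ∫ ω, stoppedValue Z τ ω ∂μ := setIntegral_le_integral hint (.of_forall fun ω => hnonneg _ ω)
    _ ≤ ∫ ω, Z 0 ω ∂μ := hoptional

theorem measure_exists_ge_le (hZ : Supermartingale Z ℱ μ) (hnonneg : 0 ≤ Z) {a : ℝ}
    (ha : 0 < a) : μ {ω | ∃ n, a ≤ Z n ω} ≤ ENNReal.ofReal ((∫ ω, Z 0 ω ∂μ) / a) := by
  have hunion : {ω | ∃ n, a ≤ Z n ω} = ⋃ n, {ω | ∃ k ≤ n, a ≤ Z k ω} := by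
    ext ω
    simp only [Set.mem_ofPred_eq, Set.mem_iUnion]
    exact ⟨fun ⟨n, hn⟩ => ⟨n, n, le_rfl, hn⟩, fun ⟨_, k, _, hk⟩ => ⟨k, hk⟩⟩
  have hmono : Monotone fun n => {ω | ∃ k ≤ n, a ≤ Z k ω} :=
    fun m n hmn ω ⟨k, hk, hak⟩ => ⟨k, hk.trans hmn, hak⟩
  rw [hunion, hmono.measure_iUnion]
  refine iSup_le fun n => ?_
  rw [← ofReal_measureReal]
  exact ENNReal.ofReal_le_ofReal <| (le_div_iff₀' ha).2 <|
    hZ.mul_measureReal_exists_le_ge_le hnonneg a n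

end MeasureTheory.Supermartingale

namespace MeasureTheory

variable {Ω : Type*} {m0 : MeasurableSpace Ω} {μ : Measure Ω} {ℱ : Filtration ℕ m0}
  {M : ℕ → Ω → ℝ} {c : ℝ}

noncomputable def predictableQuadVar (μ : Measure Ω) (ℱ : Filtration ℕ m0) (M : ℕ → Ω → ℝ)
    (n : ℕ) (ω : Ω) : ℝ :=
  ∑ k ∈ range n, (μ[fun ω' => (M (k + 1) ω' - M k ω') ^ 2 | ℱ k]) ω

@[simp]
theorem predictableQuadVar_zero : predictableQuadVar μ ℱ M 0 = 0 := by
  ext; simp [predictableQuadVar]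

theorem predictableQuadVar_succ (n : ℕ) (ω : Ω) :
    predictableQuadVar μ ℱ M (n + 1) ω =
      predictableQuadVar μ ℱ M n ω + (μ[fun ω' => (M (n + 1) ω' - M n ω') ^ 2 | ℱ n]) ω :=
  sum_range_succ _ _

theorem predictableQuadVar_nonneg (n : ℕ) : ∀ᵐ ω ∂μ, 0 ≤ predictableQuadVar μ ℱ M n ω := by
  have hcond (k : ℕ) := condExp_nonneg (m := ℱ k) (μ := μ)
    (f := fun ω => (M (k + 1) ω - M k ω) ^ 2) (.of_forall fun ω => sq_nonneg _)
  filter_upwards [ae_all_iff.2 hcond] with ω hω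
  exact sum_nonneg fun k _ => hω k

theorem stronglyMeasurable_predictableQuadVar {n j : ℕ} (hnj : n ≤ j + 1) :
    StronglyMeasurable[ℱ j] (predictableQuadVar μ ℱ M n) := by
  unfold predictableQuadVar
  simp_rw [← Finset.sum_apply]
  refine Finset.stronglyMeasurable_sum _ fun k hk => stronglyMeasurable_condExp.mono (ℱ.mono ?_)
  have := mem_range.1 hk
  omega

theorem Martingale.condExp_sub_ae_eq_zero [IsFiniteMeasure μ] (hM : Martingale M ℱ μ) (i : ℕ) :
    μ[fun ω => M (i + 1) ω - M i ω | ℱ i] =ᵐ[μ] 0 := by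
  have hself : μ[M i | ℱ i] = M i :=
    condExp_of_stronglyMeasurable (ℱ.le i) (hM.stronglyAdapted i) (hM.integrable i)
  filter_upwards [condExp_sub (hM.integrable (i + 1)) (hM.integrable i) (ℱ i),
    hM.condExp_ae_eq (Nat.le_succ i)] with ω hsub hnext
  rw [Pi.sub_apply, hnext, hself, sub_self] at hsub
  exact hsub

theorem integrable_exp_mul_of_abs_le [IsFiniteMeasure μ] {f : Ω → ℝ}
    (hf : AEStronglyMeasurable f μ) (hbdd : ∀ ω, |f ω| ≤ c) (l : ℝ) :
    Integrable (fun ω => Real.exp (l * f ω)) μ := by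
  refine .of_bound (Real.continuous_exp.comp_aestronglyMeasurable (hf.const_mul l))
    (Real.exp (|l| * c)) (.of_forall fun ω => ?_)
  rw [Real.norm_eq_abs, Real.abs_exp, Real.exp_le_exp]
  calc l * f ω ≤ |l * f ω| := le_abs_self _
    _ ≤ |l| * c := by rw [abs_mul]; gcongr; exact hbdd ω

theorem Martingale.condExp_exp_mul_sub_le [IsFiniteMeasure μ] {l : ℝ} (hM : Martingale M ℱ μ)
    (hbdd : ∀ n ω, |M (n + 1) ω - M n ω| ≤ c) (hl : 0 ≤ l) (hlc : l * c < 1) (i : ℕ) :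
    μ[fun ω => Real.exp (l * (M (i + 1) ω - M i ω)) | ℱ i] ≤ᵐ[μ]
      fun ω => 1 + l ^ 2 / (2 * (1 - l * c)) *
        (μ[fun ω' => (M (i + 1) ω' - M i ω') ^ 2 | ℱ i]) ω := by
  set h := l ^ 2 / (2 * (1 - l * c))
  set D : Ω → ℝ := fun ω => M (i + 1) ω - M i ω
  have hDmeas : StronglyMeasurable D :=
    ((hM.stronglyAdapted (i + 1)).mono (ℱ.le _)).sub ((hM.stronglyAdapted i).mono (ℱ.le _))
  have hDint : Integrable D μ := (hM.integrable (i + 1)).sub (hM.integrable i)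
  have hD2int : Integrable (D ^ 2) μ :=
    .of_bound (hDmeas.pow 2).aestronglyMeasurable (c ^ 2) <| .of_forall fun ω => by
      rw [Real.norm_eq_abs, Pi.pow_apply, abs_pow]
      exact pow_le_pow_left₀ (abs_nonneg _) (hbdd i ω) 2
  have hexp_le (ω : Ω) : Real.exp (l * D ω) ≤ 1 + l * D ω + h * D ω ^ 2 := by
    have hu : |l * D ω| ≤ l * c := by
      rw [abs_mul, abs_of_nonneg hl]
      exact mul_le_mul_of_nonneg_left (hbdd i ω) hl
    have := Real.exp_le_one_add_add_sq_div hu hlc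
    rwa [mul_pow, mul_div_right_comm] at this
  have hquad : μ[fun ω => 1 + l * D ω + h * D ω ^ 2 | ℱ i] =ᵐ[μ]
      fun ω => 1 + l * (μ[D | ℱ i]) ω + h * (μ[D ^ 2 | ℱ i]) ω := by
    have hsum : μ[(fun _ => 1) + l • D + h • D ^ 2 | ℱ i] =ᵐ[μ]
        μ[fun _ => 1 | ℱ i] + μ[l • D | ℱ i] + μ[h • D ^ 2 | ℱ i] :=
      (condExp_add ((integrable_const 1).add (hDint.smul l)) (hD2int.smul h) _).trans <|
        (condExp_add (integrable_const 1) (hDint.smul l) _).add .rfl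
    filter_upwards [hsum, condExp_smul (m := ℱ i) (μ := μ) l D,
      condExp_smul (m := ℱ i) (μ := μ) h (D ^ 2)] with ω hsum hD hD2
    simp only [Pi.add_apply, Pi.smul_apply, smul_eq_mul] at hsum hD hD2
    rw [condExp_const (ℱ.le i)] at hsum
    rw [← hD, ← hD2]
    exact hsum
  filter_upwards [condExp_mono (m := ℱ i) (g := fun ω => 1 + l * D ω + h * D ω ^ 2)
    (integrable_exp_mul_of_abs_le hDint.1 (hbdd i) l)
    (((integrable_const 1).add (hDint.const_mul l)).add (hD2int.const_mul h))
    (.of_forall hexp_le), hquad, hM.condExp_sub_ae_eq_zero i] with ω hmono hquad hzero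
  rw [hquad, hzero, Pi.zero_apply, mul_zero, add_zero] at hmono
  exact hmono

theorem Martingale.supermartingale_exp_mul_sub_predictableQuadVar [IsFiniteMeasure μ] {l : ℝ}
    (hM : Martingale M ℱ μ) (hM0 : ∀ ω, M 0 ω = 0) (hbdd : ∀ n ω, |M (n + 1) ω - M n ω| ≤ c)
    (hl : 0 ≤ l) (hlc : l * c < 1) :
    Supermartingale (fun n ω => Real.exp (l * M n ω -
      l ^ 2 / (2 * (1 - l * c)) * predictableQuadVar μ ℱ M n ω)) ℱ μ := by
  set h := l ^ 2 / (2 * (1 - l * c))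
  have hh : 0 ≤ h := div_nonneg (sq_nonneg l) (by linarith)
  set V := predictableQuadVar μ ℱ M
  set Z : ℕ → Ω → ℝ := fun n ω => Real.exp (l * M n ω - h * V n ω)
  have hadapted : StronglyAdapted ℱ Z := fun n =>
    Real.continuous_exp.comp_stronglyMeasurable (((hM.stronglyAdapted n).const_mul l).sub
      ((stronglyMeasurable_predictableQuadVar (by omega)).const_mul h))
  have hMle (n : ℕ) (ω : Ω) : M n ω ≤ n * c := by
    have := dist_le_range_sum_of_dist_le (f := fun k => M k ω) (d := fun _ => c) n
      fun _ => by rw [dist_comm, Real.dist_eq]; exact hbdd _ ω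
    simp only [hM0, Real.dist_eq, zero_sub, abs_neg, sum_const, card_range, nsmul_eq_mul] at this
    exact (le_abs_self _).trans this
  have hint (n : ℕ) : Integrable (Z n) μ := by
    refine .of_bound ((hadapted n).mono (ℱ.le n)).aestronglyMeasurable (Real.exp (l * (n * c))) ?_
    filter_upwards [predictableQuadVar_nonneg n] with ω hV
    rw [Real.norm_eq_abs, Real.abs_exp, Real.exp_le_exp]
    nlinarith [mul_le_mul_of_nonneg_left (hMle n ω) hl, mul_nonneg hh hV]
  refine supermartingale_nat hadapted hint fun i => ?_
  set A : Ω → ℝ := fun ω => Real.exp (l * M i ω - h * V (i + 1) ω)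
  set G : Ω → ℝ := fun ω => Real.exp (l * (M (i + 1) ω - M i ω))
  have hZAG : Z (i + 1) = A * G := by
    ext ω
    simp only [Z, A, G, Pi.mul_apply, ← Real.exp_add]
    ring_nf
  have hA : StronglyMeasurable[ℱ i] A :=
    Real.continuous_exp.comp_stronglyMeasurable (((hM.stronglyAdapted i).const_mul l).sub
      ((stronglyMeasurable_predictableQuadVar le_rfl).const_mul h))
  have hGint : Integrable G μ :=
    integrable_exp_mul_of_abs_le (hM.integrable (i + 1) |>.sub (hM.integrable i)).1 (hbdd i) l
  rw [hZAG]
  filter_upwards [condExp_mul_of_stronglyMeasurable_left hA (hZAG ▸ hint (i + 1)) hGint,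
    hM.condExp_exp_mul_sub_le hbdd hl hlc i] with ω hpull hG
  set Q := μ[fun ω' => (M (i + 1) ω' - M i ω') ^ 2 | ℱ i]
  calc μ[A * G | ℱ i] ω = A ω * μ[G | ℱ i] ω := hpull
    _ ≤ A ω * (1 + h * Q ω) := mul_le_mul_of_nonneg_left hG (Real.exp_pos _).le
    _ ≤ A ω * Real.exp (h * Q ω) := by
        gcongr
        linarith [Real.add_one_le_exp (h * Q ω)]
    _ = Z i ω := by
        have hV : V (i + 1) ω = V i ω + Q ω := predictableQuadVar_succ i ω
        rw [← Real.exp_add, hV]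
        exact congrArg Real.exp (by ring)

end MeasureTheory

/-- Freedman's inequality (anytime version): for a martingale `M` with `M 0 = 0` and
increments bounded by `c`, the probability that at some time `n` the martingale exceeds
`x` while its predictable quadratic variation is at most `y` is bounded by
`exp(-x²/(2(y + cx)))`. -/
theorem stmt19 {Ω : Type*} {m0 : MeasurableSpace Ω} {μ : Measure Ω}
    [IsProbabilityMeasure μ] (ℱ : Filtration ℕ m0)
    (M : ℕ → Ω → ℝ) (hM : Martingale M ℱ μ)
    (c : ℝ) (hc : 0 < c)
    (hbdd : ∀ n ω, |M (n + 1) ω - M n ω| ≤ c)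
    (hM0 : ∀ ω, M 0 ω = 0)
    (x y : ℝ) (hx : 0 < x) (hy : 0 < y) :
    μ {ω | ∃ n, x ≤ M n ω ∧
        ∑ k ∈ range n, (μ[fun ω' => (M (k + 1) ω' - M k ω') ^ 2 | ℱ k]) ω ≤ y}
      ≤ ENNReal.ofReal (Real.exp (-(x ^ 2) / (2 * (y + c * x)))) := by
  have hycx : 0 < y + c * x := by positivity
  set l := x / (y + c * x)
  have hl : 0 ≤ l := by positivity
  have hlc : l * c < 1 := by rw [div_mul_eq_mul_div, div_lt_one hycx]; linarith
  set h := l ^ 2 / (2 * (1 - l * c))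
  have hh : 0 ≤ h := div_nonneg (sq_nonneg l) (by linarith)
  have hexponent : l * x - h * y = x ^ 2 / (2 * (y + c * x)) := by
    have : 1 - l * c = y / (y + c * x) := by simp only [l]; field_simp; ring
    simp only [h, this, l]
    field_simp
    ring
  have hZ := hM.supermartingale_exp_mul_sub_predictableQuadVar hM0 hbdd hl hlc
  calc μ {ω | ∃ n, x ≤ M n ω ∧ predictableQuadVar μ ℱ M n ω ≤ y}
      ≤ μ {ω | ∃ n, Real.exp (l * x - h * y) ≤
          Real.exp (l * M n ω - h * predictableQuadVar μ ℱ M n ω)} :=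
        measure_mono fun ω ⟨n, hxM, hV⟩ => ⟨n, Real.exp_le_exp.2 (by gcongr)⟩
    _ ≤ ENNReal.ofReal ((∫ ω, Real.exp (l * M 0 ω - h * predictableQuadVar μ ℱ M 0 ω) ∂μ) /
          Real.exp (l * x - h * y)) :=
        hZ.measure_exists_ge_le (fun n ω => (Real.exp_pos _).le) (Real.exp_pos _)
    _ = ENNReal.ofReal (Real.exp (-(x ^ 2) / (2 * (y + c * x)))) := by
        simp [hM0, hexponent, Real.exp_neg, neg_div]
end
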